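/- arXiv:2504.02379 — 7 statements merged into one kernel-verified Lean document; each statement's English description precedes it below -/
import Mathlib

section
/- Let N ≥ 2 be an integer, A, B > 0 and α > β > 1. If H = (h_1, …, h_{N−1}) ∈ (0,∞)^{N−1} is a critical point of J (i.e. all partial derivatives ∂_{h_k} J(H) = Σ_{i=1}^{k} Σ_{j=k}^{N−1} L'(Σ_{ℓ=i}^{j} h_ℓ) vanish), then max_{k=1,…,N−1} h_k ≤ ĥ, where ĥ = (αA/(βB))^{1/(α−β)}. -/
/-! Every partial derivative `∂_{h_k} J` is a sum of values `L'(s)` at lengths `s = h_i + ⋯ + h_j`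
with `i ≤ k ≤ j`, so `s ≥ h_k`. Since `L' > 0` exactly beyond `ĥ`, a single `h_k > ĥ` makes
`∂_{h_k} J` a nonempty sum of positive terms, contradicting criticality. -/

/-- Derivative of the Lennard-Jones potential `L(h) = A/h^α − B/h^β`:
`L'(h) = −αA/h^(α+1) + βB/h^(β+1)`. -/
noncomputable def LJ' (A B α β x : ℝ) : ℝ :=
  -(α * A) / x ^ (α + 1) + (β * B) / x ^ (β + 1)

open Finset

lemma LJ'_eq_div {A B α β x : ℝ} (hx : 0 < x) :
    LJ' A B α β x = (β * B * x ^ (α - β) - α * A) / x ^ (α + 1) := by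
  have hsplit : x ^ (α + 1) = x ^ (α - β) * x ^ (β + 1) := by
    rw [← Real.rpow_add hx]; ring_nf
  have hpos : 0 < x ^ (α - β) := Real.rpow_pos_of_pos hx _
  have hpos' : 0 < x ^ (β + 1) := Real.rpow_pos_of_pos hx _
  rw [LJ', hsplit]
  field_simp
  ring

lemma LJ'_pos_of_lt {A B α β x : ℝ} (hA : 0 < A) (hB : 0 < B) (hβ : 0 < β) (hαβ : β < α)
    (hx : (α * A / (β * B)) ^ (1 / (α - β)) < x) : 0 < LJ' A B α β x := by
  have hc : 0 < α * A / (β * B) := by have := hβ.trans hαβ; positivity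
  have hγ : 0 < α - β := sub_pos.2 hαβ
  have hx0 : 0 < x := (Real.rpow_pos_of_pos hc _).trans hx
  have hpow : α * A / (β * B) < x ^ (α - β) := by
    have h := Real.rpow_lt_rpow (Real.rpow_pos_of_pos hc _).le hx hγ
    rwa [one_div, Real.rpow_inv_rpow hc.le hγ.ne'] at h
  rw [div_lt_iff₀ (by positivity)] at hpow
  rw [LJ'_eq_div hx0]
  exact div_pos (by linarith) (Real.rpow_pos_of_pos hx0 _)

lemma le_sum_Icc_of_mem {f : ℕ → ℝ} {a b i j k : ℕ} (hf : ∀ ℓ ∈ Icc a b, 0 ≤ f ℓ)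
    (hai : a ≤ i) (hik : i ≤ k) (hkj : k ≤ j) (hjb : j ≤ b) :
    f k ≤ ∑ ℓ ∈ Icc i j, f ℓ :=
  single_le_sum (fun ℓ hℓ => hf ℓ (Icc_subset_Icc hai hjb hℓ)) (mem_Icc.2 ⟨hik, hkj⟩)

theorem spear_critical_point_upper_bound_general
    (N : ℕ) (A B α β : ℝ) (hA : 0 < A) (hB : 0 < B)
    (hβ : 1 < β) (hαβ : β < α) (H : ℕ → ℝ)
    (Hpos : ∀ k ∈ Finset.Icc 1 (N - 1), 0 < H k)
    (Hcrit : ∀ k ∈ Finset.Icc 1 (N - 1),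
      ∑ i ∈ Finset.Icc 1 k, ∑ j ∈ Finset.Icc k (N - 1),
        LJ' A B α β (∑ ℓ ∈ Finset.Icc i j, H ℓ) = 0) :
    ∀ k ∈ Finset.Icc 1 (N - 1), H k ≤ (α * A / (β * B)) ^ (1 / (α - β)) := by
  intro k hk
  by_contra! hlarge
  obtain ⟨hk1, hkN⟩ := mem_Icc.1 hk
  have hsum_pos : 0 < ∑ i ∈ Icc 1 k, ∑ j ∈ Icc k (N - 1),
      LJ' A B α β (∑ ℓ ∈ Icc i j, H ℓ) := by
    refine sum_pos (fun i hi => sum_pos (fun j hj => ?_) ⟨k, mem_Icc.2 ⟨le_rfl, hkN⟩⟩)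
      ⟨k, mem_Icc.2 ⟨hk1, le_rfl⟩⟩
    obtain ⟨hi1, hik⟩ := mem_Icc.1 hi
    obtain ⟨hkj, hjN⟩ := mem_Icc.1 hj
    have hHk_le := le_sum_Icc_of_mem (fun ℓ hℓ => (Hpos ℓ hℓ).le) hi1 hik hkj hjN
    exact LJ'_pos_of_lt hA hB (zero_lt_one.trans hβ) hαβ (hlarge.trans_le hHk_le)
  exact hsum_pos.ne' (Hcrit k hk)

/-- If `H ∈ (0,∞)^{N−1}` is a critical point of the spear energy `J`
(i.e. all partial derivatives `∂_{h_k} J(H) = Σ_{i=1}^{k} Σ_{j=k}^{N−1} L'(Σ_{ℓ=i}^{j} h_ℓ)`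
vanish), then every `h_k` is at most `ĥ = (αA/(βB))^{1/(α−β)}`. -/
theorem spear_critical_point_upper_bound
    (N : ℕ) (hN : 2 ≤ N) (A B α β : ℝ) (hA : 0 < A) (hB : 0 < B)
    (hβ : 1 < β) (hαβ : β < α) (H : ℕ → ℝ)
    (Hpos : ∀ k ∈ Finset.Icc 1 (N - 1), 0 < H k)
    (Hcrit : ∀ k ∈ Finset.Icc 1 (N - 1),
      ∑ i ∈ Finset.Icc 1 k, ∑ j ∈ Finset.Icc k (N - 1),
        LJ' A B α β (∑ ℓ ∈ Finset.Icc i j, H ℓ) = 0) :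
    ∀ k ∈ Finset.Icc 1 (N - 1), H k ≤ (α * A / (β * B)) ^ (1 / (α - β)) :=
  spear_critical_point_upper_bound_general N A B α β hA hB hβ hαβ H Hpos Hcrit
end

section
/- Let N ≥ 2 be an integer, A, B > 0 and α > β > 1. If H = (h_1, …, h_{N−1}) ∈ (0,∞)^{N−1} is a critical point of J (i.e. all partial derivatives ∂_{h_k} J(H) = Σ_{i=1}^{k} Σ_{j=k}^{N−1} L'(Σ_{ℓ=i}^{j} h_ℓ) vanish), then min_{k=1,…,N−1} h_k ≥ ȟ, where ȟ = (αA/(βBζ(β)))^{1/(α−β)} and ζ denotes the Riemann zeta function. -/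
/-!
Let `m = h_{k₀}` be the smallest spacing. Criticality at `k₀` balances the attractive sum
`αA Σ S^{-(α+1)}` against the repulsive sum `βB Σ S^{-(β+1)}`, both over the sums `S` of the
segments `[i, j] ∋ k₀`. The attractive sum is at least its diagonal term `m^{-(α+1)}`. A segment
of length `d` has `S ≥ d m`, and at most `d` segments through `k₀` have length `d`, so the
repulsive sum is at most `Σ_d d (d m)^{-(β+1)} ≤ ζ(β) m^{-(β+1)}`. Hence `m^{α-β} ≥ αA/(βBζ(β))`.
-/

/-- The Riemann zeta function for real `x > 1`, `ζ(x) = Σ_{n ≥ 1} n^{−x}`. -/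
noncomputable def zetaR (x : ℝ) : ℝ := ∑' n : ℕ, (1 : ℝ) / ((n : ℝ) + 1) ^ x

open Finset

lemma summable_one_div_nat_add_one_rpow {β : ℝ} (hβ : 1 < β) :
    Summable (fun n : ℕ => 1 / ((n : ℝ) + 1) ^ β) := by
  simpa using (summable_nat_add_iff 1).mpr (Real.summable_one_div_nat_rpow.mpr hβ)

lemma zetaR_pos {β : ℝ} (hβ : 1 < β) : 0 < zetaR β :=
  (summable_one_div_nat_add_one_rpow hβ).tsum_pos (fun _ => by positivity) 0 (by simp)

lemma sum_Icc_one_div_rpow_le_zetaR {β : ℝ} (hβ : 1 < β) (n : ℕ) :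
    ∑ d ∈ Icc 1 n, 1 / (d : ℝ) ^ β ≤ zetaR β := by
  have hshift : ∑ d ∈ Icc 1 n, 1 / (d : ℝ) ^ β = ∑ m ∈ range n, 1 / ((m : ℝ) + 1) ^ β := by
    rw [← Ico_add_one_right_eq_Icc, sum_Ico_eq_sum_range]
    simp [add_comm]
  rw [hshift]
  exact (summable_one_div_nat_add_one_rpow hβ).sum_le_tsum _ (fun _ _ => by positivity)

lemma sum_segments_through_le {k n : ℕ} {g : ℕ → ℝ} (hg : ∀ d, 0 ≤ g d) :
    ∑ p ∈ Icc 1 k ×ˢ Icc k n, g (p.2 + 1 - p.1) ≤ ∑ d ∈ Icc 1 n, d * g d := by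
  -- a segment `[i, j] ∋ k` of length `d` is determined by `d` and `k - i < d`
  set e : ℕ × ℕ → (Σ _ : ℕ, ℕ) := fun p => ⟨p.2 + 1 - p.1, k - p.1⟩
  have he : Set.InjOn e (Icc 1 k ×ˢ Icc k n : Finset (ℕ × ℕ)) := by
    rintro ⟨i, j⟩ hij ⟨i', j'⟩ hij' heq
    simp only [coe_product, coe_Icc, Set.mem_prod, Set.mem_Icc, e, Sigma.mk.injEq,
      heq_eq_eq] at hij hij' heq
    ext <;> simp only <;> omega
  have himage : (Icc 1 k ×ˢ Icc k n).image e ⊆ (Icc 1 n).sigma range := by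
    simp only [subset_iff, mem_image, mem_product, mem_Icc, mem_sigma, mem_range]
    rintro _ ⟨⟨i, j⟩, hij, rfl⟩
    simp only [e]
    omega
  calc ∑ p ∈ Icc 1 k ×ˢ Icc k n, g (p.2 + 1 - p.1)
      = ∑ q ∈ (Icc 1 k ×ˢ Icc k n).image e, g q.1 := by
        rw [sum_image he]
    _ ≤ ∑ q ∈ (Icc 1 n).sigma range, g q.1 :=
        sum_le_sum_of_subset_of_nonneg himage fun q _ _ => hg q.1
    _ = ∑ d ∈ Icc 1 n, d * g d := by simp [sum_sigma]

lemma div_rpow_one_div_sub_le {a b m p q : ℝ} (ha : 0 ≤ a) (hb : 0 < b) (hm : 0 < m)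
    (hqp : q < p) (h : a / m ^ p ≤ b / m ^ q) : (a / b) ^ (1 / (p - q)) ≤ m := by
  have hmp := Real.rpow_pos_of_pos hm p
  have hmq := Real.rpow_pos_of_pos hm q
  rw [one_div, Real.rpow_inv_le_iff_of_pos (div_nonneg ha hb.le) hm.le (sub_pos.2 hqp),
    Real.rpow_sub hm, div_le_iff₀ hb, div_mul_eq_mul_div, le_div_iff₀ hmq]
  rw [div_le_div_iff₀ hmp hmq] at h
  linarith

lemma balance_of_sum_LJ'_eq_zero {ι : Type*} {s : Finset ι} {A B α β : ℝ} {x : ι → ℝ}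
    (h : ∑ p ∈ s, LJ' A B α β (x p) = 0) :
    α * A * ∑ p ∈ s, 1 / x p ^ (α + 1) = β * B * ∑ p ∈ s, 1 / x p ^ (β + 1) := by
  have hsplit : ∑ p ∈ s, LJ' A B α β (x p) =
      β * B * ∑ p ∈ s, 1 / x p ^ (β + 1) - α * A * ∑ p ∈ s, 1 / x p ^ (α + 1) := by
    simp only [mul_sum, ← sum_sub_distrib, LJ']
    exact sum_congr rfl fun p _ => by ring
  linarith

lemma card_mul_le_sum_Icc {H : ℕ → ℝ} {m : ℝ} {i j : ℕ} (hH : ∀ ℓ ∈ Icc i j, m ≤ H ℓ) :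
    ((j + 1 - i : ℕ) : ℝ) * m ≤ ∑ ℓ ∈ Icc i j, H ℓ := by
  simpa [Nat.card_Icc] using card_nsmul_le_sum _ _ _ hH

lemma sum_segments_one_div_rpow_le {β m : ℝ} (hβ : 1 < β) (hm : 0 < m) {k n : ℕ}
    {x : ℕ × ℕ → ℝ} (hx : ∀ p ∈ Icc 1 k ×ˢ Icc k n, ((p.2 + 1 - p.1 : ℕ) : ℝ) * m ≤ x p) :
    ∑ p ∈ Icc 1 k ×ˢ Icc k n, 1 / x p ^ (β + 1) ≤ zetaR β / m ^ (β + 1) := by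
  set g : ℕ → ℝ := fun d => 1 / ((d : ℝ) * m) ^ (β + 1)
  calc ∑ p ∈ Icc 1 k ×ˢ Icc k n, 1 / x p ^ (β + 1)
      ≤ ∑ p ∈ Icc 1 k ×ˢ Icc k n, g (p.2 + 1 - p.1) := by
        refine sum_le_sum fun p hp => ?_
        have hlen : (1 : ℝ) ≤ (p.2 + 1 - p.1 : ℕ) := by
          simp only [mem_product, mem_Icc] at hp
          exact_mod_cast (by omega : 1 ≤ p.2 + 1 - p.1)
        have hpos : 0 < ((p.2 + 1 - p.1 : ℕ) : ℝ) * m := by positivity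
        exact one_div_le_one_div_of_le (by positivity)
          (Real.rpow_le_rpow hpos.le (hx p hp) (by linarith))
    _ ≤ ∑ d ∈ Icc 1 n, d * g d := sum_segments_through_le fun d => by positivity
    _ = (∑ d ∈ Icc 1 n, 1 / (d : ℝ) ^ β) / m ^ (β + 1) := by
        rw [sum_div]
        refine sum_congr rfl fun d hd => ?_
        have hd : (0 : ℝ) < d := by exact_mod_cast (mem_Icc.mp hd).1
        simp only [g, Real.mul_rpow hd.le hm.le, Real.rpow_add hd, Real.rpow_one]
        field_simp
    _ ≤ zetaR β / m ^ (β + 1) := by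
        gcongr
        exact sum_Icc_one_div_rpow_le_zetaR hβ n

theorem spear_critical_point_lower_bound_general
    (N : ℕ) (A B α β : ℝ) (hA : 0 < A) (hB : 0 < B)
    (hβ : 1 < β) (hαβ : β < α) (H : ℕ → ℝ)
    (Hpos : ∀ k ∈ Finset.Icc 1 (N - 1), 0 < H k)
    (Hcrit : ∀ k ∈ Finset.Icc 1 (N - 1),
      ∑ i ∈ Finset.Icc 1 k, ∑ j ∈ Finset.Icc k (N - 1),
        LJ' A B α β (∑ ℓ ∈ Finset.Icc i j, H ℓ) = 0) :
    ∀ k ∈ Finset.Icc 1 (N - 1),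
      (α * A / (β * B * zetaR β)) ^ (1 / (α - β)) ≤ H k := by
  intro k hk
  obtain ⟨k₀, hk₀, hmin⟩ := exists_min_image (Icc 1 (N - 1)) H ⟨k, hk⟩
  have hm : 0 < H k₀ := Hpos k₀ hk₀
  set P := Icc 1 k₀ ×ˢ Icc k₀ (N - 1)
  set S : ℕ × ℕ → ℝ := fun p => ∑ ℓ ∈ Icc p.1 p.2, H ℓ
  have hS : ∀ p ∈ P, ((p.2 + 1 - p.1 : ℕ) : ℝ) * H k₀ ≤ S p := fun p hp =>
    card_mul_le_sum_Icc fun ℓ hℓ =>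
      hmin ℓ (by simp only [P, mem_product, mem_Icc] at hp hℓ ⊢; omega)
  have hbalance : α * A * ∑ p ∈ P, 1 / S p ^ (α + 1) = β * B * ∑ p ∈ P, 1 / S p ^ (β + 1) :=
    balance_of_sum_LJ'_eq_zero (by rw [sum_product]; exact Hcrit k₀ hk₀)
  have hdiag : 1 / H k₀ ^ (α + 1) ≤ ∑ p ∈ P, 1 / S p ^ (α + 1) := by
    have hk₀P : (k₀, k₀) ∈ P := by simp only [P, mem_product, mem_Icc] at hk₀ ⊢; omega
    simpa [S] using single_le_sum (f := fun p => 1 / S p ^ (α + 1))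
      (fun p hp => by have := (mul_nonneg (Nat.cast_nonneg _) hm.le).trans (hS p hp); positivity)
      hk₀P
  have hαA : 0 < α * A := mul_pos (by linarith) hA
  have hβB : 0 < β * B := mul_pos (by linarith) hB
  rw [← add_sub_add_right_eq_sub α β 1]
  refine (div_rpow_one_div_sub_le hαA.le (mul_pos hβB (zetaR_pos hβ)) hm (by linarith) ?_).trans
    (hmin k hk)
  calc α * A / H k₀ ^ (α + 1) = α * A * (1 / H k₀ ^ (α + 1)) := by ring
    _ ≤ α * A * ∑ p ∈ P, 1 / S p ^ (α + 1) := by gcongr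
    _ = β * B * ∑ p ∈ P, 1 / S p ^ (β + 1) := hbalance
    _ ≤ β * B * (zetaR β / H k₀ ^ (β + 1)) := by
        gcongr
        exact sum_segments_one_div_rpow_le hβ hm hS
    _ = β * B * zetaR β / H k₀ ^ (β + 1) := by ring

/-- If `H ∈ (0,∞)^{N−1}` is a critical point of the spear energy `J`
(i.e. all partial derivatives `∂_{h_k} J(H) = Σ_{i=1}^{k} Σ_{j=k}^{N−1} L'(Σ_{ℓ=i}^{j} h_ℓ)`
vanish), then every `h_k` is at least `ȟ = (αA/(βBζ(β)))^{1/(α−β)}`. -/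
theorem spear_critical_point_lower_bound
    (N : ℕ) (hN : 2 ≤ N) (A B α β : ℝ) (hA : 0 < A) (hB : 0 < B)
    (hβ : 1 < β) (hαβ : β < α) (H : ℕ → ℝ)
    (Hpos : ∀ k ∈ Finset.Icc 1 (N - 1), 0 < H k)
    (Hcrit : ∀ k ∈ Finset.Icc 1 (N - 1),
      ∑ i ∈ Finset.Icc 1 k, ∑ j ∈ Finset.Icc k (N - 1),
        LJ' A B α β (∑ ℓ ∈ Finset.Icc i j, H ℓ) = 0) :
    ∀ k ∈ Finset.Icc 1 (N - 1),
      (α * A / (β * B * zetaR β)) ^ (1 / (α - β)) ≤ H k :=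
  spear_critical_point_lower_bound_general N A B α β hA hB hβ hαβ H Hpos Hcrit
end

section
/- Let N ≥ 2 be an integer, A, B > 0 and α > β > 1. The infimum of J over (0,∞)^{N−1} is attained: there exists H* ∈ (0,∞)^{N−1} with J(H*) = inf_{H ∈ (0,∞)^{N−1}} J(H), and every such global minimizer satisfies ȟ ≤ h*_k ≤ ĥ for all k = 1, …, N−1 as well as the Euler–Lagrange equations Σ_{i=1}^{k} Σ_{j=k}^{N−1} L'(Σ_{ℓ=i}^{j} h*_ℓ) = 0 for all k = 1, …, N−1, where ȟ = (αA/(βBζ(β)))^{1/(α−β)} and ĥ = (αA/(βB))^{1/(α−β)}. -/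
/-- The Lennard-Jones potential `L(h) = A/h^α − B/h^β`. -/
noncomputable def LJ (A B α β x : ℝ) : ℝ := A / x ^ α - B / x ^ β

/-- The spear energy `J(H) = Σ_{i=1}^{N−1} Σ_{j=1}^{i} L(Σ_{ℓ=j}^{i} h_ℓ)`. -/
noncomputable def spearJ (A B α β : ℝ) (N : ℕ) (H : ℕ → ℝ) : ℝ :=
  ∑ i ∈ Finset.Icc 1 (N - 1), ∑ j ∈ Finset.Icc 1 i,
    LJ A B α β (∑ ℓ ∈ Finset.Icc j i, H ℓ)

/-!
`∂J/∂h_k` is the sum of `L'` over the chains `j..i` containing bond `k`, each of length at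
least `h_k`, and `L' > 0` beyond the minimum point `ĥ` of `L`. Hence a minimizer has `h_k ≤ ĥ`,
and lowering a bond longer than `ĥ` to `ĥ` decreases `J`. At the shortest bond `h`, a chain of
`m` bonds is at least `m h` long and at most `m` of them contain that bond, so its
Euler–Lagrange equation gives `αA / h^(α+1) ≤ βB ζ(β) / h^(β+1)`, i.e. `h ≥ ȟ`.
For existence, `J(H) ≥ L(h_k) - C` with `L → ∞` at `0` keeps bonds away from `0`, so after
truncation at `ĥ` it suffices to minimize over a compact box.
-/

open Finset Filter Topology

/-- `ĥ`, the zero of `L'`. -/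
noncomputable def ljArgmin (A B α β : ℝ) : ℝ := (α * A / (β * B)) ^ (1 / (α - β))

section LennardJones

variable {A B α β : ℝ}

theorem hasDerivAt_LJ (A B α β : ℝ) {x : ℝ} (hx : 0 < x) :
    HasDerivAt (LJ A B α β) (LJ' A B α β x) x := by
  have hpow : HasDerivAt (fun y : ℝ => A * y ^ (-α) - B * y ^ (-β))
      (A * (-α * x ^ (-α - 1)) - B * (-β * x ^ (-β - 1))) x :=
    ((Real.hasDerivAt_rpow_const (Or.inl hx.ne')).const_mul A).sub
      ((Real.hasDerivAt_rpow_const (Or.inl hx.ne')).const_mul B)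
  have heq : (fun y : ℝ => A * y ^ (-α) - B * y ^ (-β)) =ᶠ[𝓝 x] LJ A B α β := by
    filter_upwards [eventually_gt_nhds hx] with y hy
    rw [LJ, Real.rpow_neg hy.le, Real.rpow_neg hy.le]
    ring
  refine (hpow.congr_of_eventuallyEq heq.symm).congr_deriv ?_
  rw [LJ', show -α - 1 = -(α + 1) by ring, show -β - 1 = -(β + 1) by ring,
    Real.rpow_neg hx.le, Real.rpow_neg hx.le]
  field_simp
  ring

theorem ljArgmin_pos (hA : 0 < A) (hB : 0 < B) (hα : 0 < α) (hβ : 0 < β) :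
    0 < ljArgmin A B α β := by
  unfold ljArgmin
  positivity

theorem LJ'_pos_of_ljArgmin_lt (hA : 0 < A) (hB : 0 < B) (hβ : 0 < β) (hαβ : β < α) {s : ℝ}
    (hs : ljArgmin A B α β < s) : 0 < LJ' A B α β s := by
  have hs0 : 0 < s := (ljArgmin_pos hA hB (hβ.trans hαβ) hβ).trans hs
  have hα : 0 < α := hβ.trans hαβ
  have hsub : 0 < α - β := sub_pos.2 hαβ
  rw [ljArgmin, one_div, Real.rpow_inv_lt_iff_of_pos (by positivity) hs0.le hsub,
    div_lt_iff₀ (by positivity)] at hs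
  have hsplit : s ^ (α + 1) = s ^ (α - β) * s ^ (β + 1) := by
    rw [← Real.rpow_add hs0]; ring_nf
  rw [LJ', neg_div, ← sub_eq_neg_add, sub_pos,
    div_lt_div_iff₀ (by positivity) (by positivity), hsplit, ← mul_assoc]
  exact mul_lt_mul_of_pos_right (by linarith) (by positivity)

theorem exists_le_LJ (hA : 0 < A) (hB : 0 < B) (hβ : 0 ≤ β) (hαβ : β < α) :
    ∃ m ≤ 0, ∀ x, 0 < x → m ≤ LJ A B α β x := by
  have hsub : 0 < α - β := sub_pos.2 hαβ
  set r := (A / B) ^ (1 / (α - β))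
  have hr : 0 < r := by positivity
  refine ⟨-(B / r ^ β), by simp only [neg_nonpos]; positivity, fun x hx => ?_⟩
  rcases le_total r x with hrx | hxr
  · have : B / x ^ β ≤ B / r ^ β :=
      div_le_div_of_nonneg_left hB.le (by positivity) (Real.rpow_le_rpow hr.le hrx hβ)
    have : 0 ≤ A / x ^ α := by positivity
    rw [LJ]; linarith
  · have hxr' : x ^ (α - β) ≤ A / B := by
      rwa [← Real.le_rpow_inv_iff_of_pos hx.le (by positivity) hsub, ← one_div]
    have hsplit : x ^ α = x ^ (α - β) * x ^ β := by
      rw [← Real.rpow_add hx]; ring_nf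
    have : B / x ^ β ≤ A / x ^ α := by
      rw [div_le_div_iff₀ (by positivity) (by positivity), hsplit, ← mul_assoc]
      exact mul_le_mul_of_nonneg_right (by rwa [le_div_iff₀ hB, mul_comm] at hxr') (by positivity)
    have : 0 ≤ B / r ^ β := by positivity
    rw [LJ]; linarith

theorem tendsto_LJ_nhdsGT_zero (hA : 0 < A) (hα : 0 < α) (hαβ : β < α) :
    Tendsto (LJ A B α β) (𝓝[>] 0) atTop := by
  have hsub : 0 < α - β := sub_pos.2 hαβ
  have hfactor : Tendsto (fun x : ℝ => A - B * x ^ (α - β)) (𝓝[>] 0) (𝓝 A) := by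
    have := ((Real.continuousAt_rpow_const 0 (α - β) (Or.inr hsub.le)).tendsto.const_mul
      B).const_sub A
    rw [Real.zero_rpow hsub.ne', mul_zero, sub_zero] at this
    exact this.mono_left nhdsWithin_le_nhds
  refine ((tendsto_rpow_neg_nhdsGT_zero (neg_neg_of_pos hα)).atTop_mul_pos hA hfactor).congr' ?_
  filter_upwards [self_mem_nhdsWithin] with x (hx : 0 < x)
  rw [LJ, mul_sub, Real.rpow_neg hx.le, Real.rpow_sub hx]
  field_simp

end LennardJones

theorem sum_Icc_prod_Icc_le_sum_range (g : ℕ → ℝ) (hg : ∀ m, 0 ≤ g m) (n k : ℕ) :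
    ∑ p ∈ Icc 1 k ×ˢ Icc k n, g (p.2 - p.1) ≤ ∑ m ∈ range n, ((m : ℝ) + 1) * g m := by
  have hmaps : ∀ p ∈ Icc 1 k ×ˢ Icc k n, p.2 - p.1 ∈ range n := by
    intro p hp
    simp only [mem_product, mem_Icc, mem_range] at hp ⊢
    omega
  rw [← sum_fiberwise_of_maps_to hmaps]
  refine sum_le_sum fun m _ => ?_
  rw [sum_congr rfl fun p hp => by rw [(mem_filter.1 hp).2], sum_const, nsmul_eq_mul]
  refine mul_le_mul_of_nonneg_right ?_ (hg m)
  -- an interval of length `m + 1` containing `k` is determined by its distance `k - p.1 ≤ m`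
  have hcard : #{p ∈ Icc 1 k ×ˢ Icc k n | p.2 - p.1 = m} ≤ #(range (m + 1)) := by
    refine card_le_card_of_injOn (fun p => k - p.1) (fun p hp => ?_) (fun p hp q hq hpq => ?_)
    all_goals simp only [coe_filter, Set.mem_ofPred_eq, mem_product, mem_Icc, mem_coe,
      mem_range] at *
    · omega
    · exact Prod.ext (by omega) (by omega)
  rw [card_range] at hcard
  exact_mod_cast hcard

theorem sum_Icc_prod_Icc_one_div_rpow_le_zetaR {β : ℝ} (hβ : 1 < β) (n k : ℕ) :
    ∑ p ∈ Icc 1 k ×ˢ Icc k n, 1 / (((p.2 - p.1 : ℕ) : ℝ) + 1) ^ (β + 1) ≤ zetaR β := by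
  have hsummable : Summable fun m : ℕ => 1 / ((m : ℝ) + 1) ^ β := by
    refine ((Real.summable_one_div_nat_add_rpow 1 β).2 hβ).congr fun m => ?_
    rw [abs_of_pos (by positivity)]
  calc _ ≤ ∑ m ∈ range n, ((m : ℝ) + 1) * (1 / ((m : ℝ) + 1) ^ (β + 1)) :=
        sum_Icc_prod_Icc_le_sum_range (fun m => 1 / ((m : ℝ) + 1) ^ (β + 1))
          (fun m => by positivity) n k
    _ = ∑ m ∈ range n, 1 / ((m : ℝ) + 1) ^ β := by
        refine sum_congr rfl fun m _ => ?_
        rw [Real.rpow_add (by positivity), Real.rpow_one]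
        field_simp
    _ ≤ zetaR β := hsummable.sum_le_tsum _ fun m _ => by positivity

section Spear

variable {A B α β : ℝ} {N : ℕ} {H : ℕ → ℝ}

def spearPairs (N : ℕ) : Finset (ℕ × ℕ) := {p ∈ Icc 1 (N - 1) ×ˢ Icc 1 (N - 1) | p.1 ≤ p.2}

noncomputable def spearGrad (A B α β : ℝ) (N : ℕ) (H : ℕ → ℝ) (k : ℕ) : ℝ :=
  ∑ p ∈ Icc 1 k ×ˢ Icc k (N - 1), LJ' A B α β (∑ ℓ ∈ Icc p.1 p.2, H ℓ)

theorem spearJ_eq_sum_spearPairs :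
    spearJ A B α β N H = ∑ p ∈ spearPairs N, LJ A B α β (∑ ℓ ∈ Icc p.1 p.2, H ℓ) := by
  rw [spearJ, sum_finset_product_right _ _ (fun i => Icc 1 i)]
  intro p
  simp only [spearPairs, mem_filter, mem_product, mem_Icc]
  omega

theorem filter_spearPairs_mem_Icc {k : ℕ} (hk : k ∈ Icc 1 (N - 1)) :
    {p ∈ spearPairs N | k ∈ Icc p.1 p.2} = Icc 1 k ×ˢ Icc k (N - 1) := by
  ext p
  simp only [spearPairs, mem_filter, mem_product, mem_Icc] at hk ⊢
  omega

theorem sum_Icc_pos_of_mem_spearPairs (hH : ∀ ℓ ∈ Icc 1 (N - 1), 0 < H ℓ) {p : ℕ × ℕ}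
    (hp : p ∈ spearPairs N) : 0 < ∑ ℓ ∈ Icc p.1 p.2, H ℓ := by
  simp only [spearPairs, mem_filter, mem_product, mem_Icc] at hp
  refine sum_pos (fun ℓ hℓ => hH ℓ ?_) (nonempty_Icc.2 hp.2)
  simp only [mem_Icc] at hℓ ⊢
  omega

theorem Icc_prod_Icc_subset_spearPairs (k : ℕ) :
    Icc 1 k ×ˢ Icc k (N - 1) ⊆ spearPairs N := by
  intro p hp
  simp only [spearPairs, mem_filter, mem_product, mem_Icc] at hp ⊢
  omega

theorem forall_mem_update_pos {s : Finset ℕ} (hH : ∀ ℓ ∈ s, 0 < H ℓ) (k : ℕ) {t : ℝ}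
    (ht : 0 < t) : ∀ ℓ ∈ s, 0 < Function.update H k t ℓ := by
  intro ℓ hℓ
  rcases eq_or_ne ℓ k with rfl | hne
  · simpa using ht
  · simpa [hne] using hH ℓ hℓ

theorem hasDerivAt_spearJ_update (hH : ∀ ℓ ∈ Icc 1 (N - 1), 0 < H ℓ) {k : ℕ}
    (hk : k ∈ Icc 1 (N - 1)) {t : ℝ} (ht : 0 < t) :
    HasDerivAt (fun s => spearJ A B α β N (Function.update H k s))
      (spearGrad A B α β N (Function.update H k t) k) t := by
  simp only [spearJ_eq_sum_spearPairs, spearGrad, ← filter_spearPairs_mem_Icc hk, sum_filter]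
  refine HasDerivAt.fun_sum fun p hp => ?_
  split_ifs with hkp
  · have hchain : HasDerivAt (fun s => ∑ ℓ ∈ Icc p.1 p.2, Function.update H k s ℓ) 1 t := by
      simp only [sum_update_of_mem hkp]
      exact (hasDerivAt_id' t).add_const _
    have hcomp := (hasDerivAt_LJ A B α β
      (sum_Icc_pos_of_mem_spearPairs (forall_mem_update_pos hH k ht) hp)).comp t hchain
    rwa [mul_one] at hcomp
  · simp only [sum_update_of_notMem hkp]
    exact hasDerivAt_const t _

theorem spearGrad_eq_zero_of_forall_le (hH : ∀ ℓ ∈ Icc 1 (N - 1), 0 < H ℓ)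
    (hmin : ∀ G : ℕ → ℝ, (∀ ℓ ∈ Icc 1 (N - 1), 0 < G ℓ) → spearJ A B α β N H ≤ spearJ A B α β N G)
    {k : ℕ} (hk : k ∈ Icc 1 (N - 1)) : spearGrad A B α β N H k = 0 := by
  have hderiv : HasDerivAt (fun s => spearJ A B α β N (Function.update H k s))
      (spearGrad A B α β N H k) (H k) := by
    simpa using hasDerivAt_spearJ_update hH hk (hH k hk)
  refine IsLocalMin.hasDerivAt_eq_zero ?_ hderiv
  filter_upwards [Ioi_mem_nhds (hH k hk)] with t (ht : 0 < t)
  simpa using hmin _ (forall_mem_update_pos hH k ht)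

theorem spearGrad_pos (hA : 0 < A) (hB : 0 < B) (hβ : 0 < β) (hαβ : β < α)
    (hH : ∀ ℓ ∈ Icc 1 (N - 1), 0 < H ℓ) {k : ℕ} (hk : k ∈ Icc 1 (N - 1))
    (hlt : ljArgmin A B α β < H k) : 0 < spearGrad A B α β N H k := by
  have hk' := mem_Icc.1 hk
  refine sum_pos (fun p hp => LJ'_pos_of_ljArgmin_lt hA hB hβ hαβ (hlt.trans_le ?_))
    ⟨(k, k), by simp [hk'.1, hk'.2]⟩
  simp only [mem_product, mem_Icc] at hp
  refine single_le_sum (fun ℓ hℓ => (hH ℓ ?_).le) (mem_Icc.2 ⟨hp.1.2, hp.2.1⟩)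
  simp only [mem_Icc] at hℓ ⊢
  omega

theorem spearJ_update_min_ljArgmin_le (hA : 0 < A) (hB : 0 < B) (hβ : 0 < β) (hαβ : β < α)
    (hH : ∀ ℓ ∈ Icc 1 (N - 1), 0 < H ℓ) {k : ℕ} (hk : k ∈ Icc 1 (N - 1)) :
    spearJ A B α β N (Function.update H k (min (H k) (ljArgmin A B α β))) ≤ spearJ A B α β N H := by
  set a := ljArgmin A B α β
  have ha : 0 < a := ljArgmin_pos hA hB (hβ.trans hαβ) hβ
  rcases le_total (H k) a with hle | hge
  · rw [min_eq_left hle, Function.update_eq_self]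
  have hderiv : ∀ t, 0 < t → HasDerivAt (fun s => spearJ A B α β N (Function.update H k s))
      (spearGrad A B α β N (Function.update H k t) k) t :=
    fun t ht => hasDerivAt_spearJ_update hH hk ht
  have hmono :
      MonotoneOn (fun s => spearJ A B α β N (Function.update H k s)) (Set.Icc a (H k)) := by
    refine monotoneOn_of_hasDerivWithinAt_nonneg
      (f' := fun t => spearGrad A B α β N (Function.update H k t) k) (convex_Icc _ _)
      (fun t ht => (hderiv t (ha.trans_le ht.1)).continuousAt.continuousWithinAt)
      (fun t ht => ?_) (fun t ht => ?_) <;> rw [interior_Icc] at ht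
    · exact (hderiv t (ha.trans ht.1)).hasDerivWithinAt
    · refine (spearGrad_pos hA hB hβ hαβ (forall_mem_update_pos hH k (ha.trans ht.1)) hk ?_).le
      simpa using ht.1
  simpa [min_eq_right hge] using hmono ⟨le_rfl, hge⟩ ⟨hge, le_rfl⟩ hge

theorem spearJ_ite_min_ljArgmin_le (hA : 0 < A) (hB : 0 < B) (hβ : 0 < β) (hαβ : β < α) {s : Finset ℕ}
    (hs : s ⊆ Icc 1 (N - 1)) (hH : ∀ ℓ ∈ Icc 1 (N - 1), 0 < H ℓ) :
    spearJ A B α β N (fun ℓ => if ℓ ∈ s then min (H ℓ) (ljArgmin A B α β) else H ℓ) ≤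
      spearJ A B α β N H := by
  induction s using Finset.induction_on with
  | empty => simp
  | insert a s ha ih =>
    set G := fun ℓ => if ℓ ∈ s then min (H ℓ) (ljArgmin A B α β) else H ℓ
    have hG : ∀ ℓ ∈ Icc 1 (N - 1), 0 < G ℓ := fun ℓ hℓ => by
      simp only [G]
      split_ifs
      exacts [lt_min (hH ℓ hℓ) (ljArgmin_pos hA hB (hβ.trans hαβ) hβ), hH ℓ hℓ]
    have hupdate : (fun ℓ => if ℓ ∈ insert a s then min (H ℓ) (ljArgmin A B α β) else H ℓ) =
        Function.update G a (min (G a) (ljArgmin A B α β)) := by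
      ext ℓ
      rcases eq_or_ne ℓ a with rfl | hne
      · simp [G, ha]
      · simp [G, hne]
    rw [hupdate]
    exact (spearJ_update_min_ljArgmin_le hA hB hβ hαβ hG (hs (mem_insert_self a s))).trans
      (ih ((subset_insert a s).trans hs))

theorem LJ_add_card_smul_le_spearJ (hH : ∀ ℓ ∈ Icc 1 (N - 1), 0 < H ℓ) {k : ℕ}
    (hk : k ∈ Icc 1 (N - 1)) {m : ℝ} (hm0 : m ≤ 0) (hm : ∀ x, 0 < x → m ≤ LJ A B α β x) :
    LJ A B α β (H k) + #(spearPairs N) • m ≤ spearJ A B α β N H := by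
  have hkk : (k, k) ∈ spearPairs N := by
    simp only [spearPairs, mem_filter, mem_product, mem_Icc] at hk ⊢
    omega
  rw [spearJ_eq_sum_spearPairs, ← add_sum_erase _ _ hkk, Icc_self, sum_singleton]
  gcongr
  calc #(spearPairs N) • m ≤ #((spearPairs N).erase (k, k)) • m :=
        nsmul_le_nsmul_left_of_nonpos hm0 (card_erase_le)
    _ ≤ _ := card_nsmul_le_sum _ _ _ fun p hp =>
        hm _ (sum_Icc_pos_of_mem_spearPairs hH (mem_of_mem_erase hp))

theorem sum_one_div_rpow_le_zetaR_div (hβ : 1 < β) (hH : ∀ ℓ ∈ Icc 1 (N - 1), 0 < H ℓ) {k : ℕ}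
    (hk : k ∈ Icc 1 (N - 1)) (hmin : ∀ ℓ ∈ Icc 1 (N - 1), H k ≤ H ℓ) :
    ∑ p ∈ Icc 1 k ×ˢ Icc k (N - 1), 1 / (∑ ℓ ∈ Icc p.1 p.2, H ℓ) ^ (β + 1) ≤
      zetaR β / H k ^ (β + 1) := by
  have hh := hH k hk
  calc _ ≤ ∑ p ∈ Icc 1 k ×ˢ Icc k (N - 1),
        1 / (((p.2 - p.1 : ℕ) : ℝ) + 1) ^ (β + 1) / H k ^ (β + 1) := by
        refine sum_le_sum fun p hp => ?_
        simp only [mem_product, mem_Icc] at hp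
        have hlen : (((p.2 - p.1 : ℕ) : ℝ) + 1) * H k ≤ ∑ ℓ ∈ Icc p.1 p.2, H ℓ := by
          have := card_nsmul_le_sum (Icc p.1 p.2) H (H k) fun ℓ hℓ => hmin ℓ (by
            simp only [mem_Icc] at hℓ ⊢
            omega)
          rwa [nsmul_eq_mul, Nat.card_Icc, show p.2 + 1 - p.1 = p.2 - p.1 + 1 by omega,
            Nat.cast_succ] at this
        rw [div_div, ← Real.mul_rpow (by positivity) hh.le]
        gcongr
    _ = (∑ p ∈ Icc 1 k ×ˢ Icc k (N - 1), 1 / (((p.2 - p.1 : ℕ) : ℝ) + 1) ^ (β + 1)) /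
          H k ^ (β + 1) := by rw [sum_div]
    _ ≤ zetaR β / H k ^ (β + 1) := by
        gcongr
        exact sum_Icc_prod_Icc_one_div_rpow_le_zetaR hβ _ _

theorem rpow_le_of_spearGrad_eq_zero (hA : 0 < A) (hB : 0 < B) (hβ : 1 < β) (hαβ : β < α)
    (hH : ∀ ℓ ∈ Icc 1 (N - 1), 0 < H ℓ) {k : ℕ} (hk : k ∈ Icc 1 (N - 1))
    (hmin : ∀ ℓ ∈ Icc 1 (N - 1), H k ≤ H ℓ) (hgrad : spearGrad A B α β N H k = 0) :
    (α * A / (β * B * zetaR β)) ^ (1 / (α - β)) ≤ H k := by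
  have hh := hH k hk
  have hα : 0 < α := by linarith
  have hζ : 0 ≤ zetaR β := tsum_nonneg fun n => by positivity
  set P := Icc 1 k ×ˢ Icc k (N - 1)
  have hgrad_split : spearGrad A B α β N H k =
      β * B * ∑ p ∈ P, 1 / (∑ ℓ ∈ Icc p.1 p.2, H ℓ) ^ (β + 1) -
        α * A * ∑ p ∈ P, 1 / (∑ ℓ ∈ Icc p.1 p.2, H ℓ) ^ (α + 1) := by
    rw [spearGrad, mul_sum, mul_sum, ← sum_sub_distrib]
    refine sum_congr rfl fun p _ => ?_
    rw [LJ']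
    ring
  have hdiag : 1 / H k ^ (α + 1) ≤ ∑ p ∈ P, 1 / (∑ ℓ ∈ Icc p.1 p.2, H ℓ) ^ (α + 1) := by
    have hkk : (k, k) ∈ P := by simp_all [P]
    refine le_of_eq_of_le ?_ (single_le_sum (fun p hp => ?_) hkk)
    · simp
    · have := sum_Icc_pos_of_mem_spearPairs hH (Icc_prod_Icc_subset_spearPairs k hp)
      positivity
  have hbalance : α * A / H k ^ (α + 1) ≤ β * B * zetaR β / H k ^ (β + 1) := by
    calc α * A / H k ^ (α + 1) ≤ β * B * ∑ p ∈ P, 1 / (∑ ℓ ∈ Icc p.1 p.2, H ℓ) ^ (β + 1) := by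
          rw [← mul_one_div]
          linarith [mul_le_mul_of_nonneg_left hdiag (by positivity : 0 ≤ α * A)]
      _ ≤ β * B * (zetaR β / H k ^ (β + 1)) := by
          gcongr
          exact sum_one_div_rpow_le_zetaR_div hβ hH hk hmin
      _ = β * B * zetaR β / H k ^ (β + 1) := by ring
  have hpow : H k ^ (α + 1) = H k ^ (α - β) * H k ^ (β + 1) := by
    rw [← Real.rpow_add hh]; ring_nf
  rw [div_le_div_iff₀ (by positivity) (by positivity), hpow] at hbalance
  have hkey : α * A ≤ H k ^ (α - β) * (β * B * zetaR β) :=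
    le_of_mul_le_mul_right (by linarith) (by positivity : 0 < H k ^ (β + 1))
  rw [one_div, Real.rpow_inv_le_iff_of_pos (by positivity) hh.le (by linarith)]
  exact div_le_of_le_mul₀ (by positivity) (by positivity) hkey

theorem spearJ_congr {G : ℕ → ℝ} (h : ∀ ℓ ∈ Icc 1 (N - 1), H ℓ = G ℓ) :
    spearJ A B α β N H = spearJ A B α β N G := by
  simp only [spearJ_eq_sum_spearPairs]
  refine sum_congr rfl fun p hp => congrArg _ (sum_congr rfl fun ℓ hℓ => h ℓ ?_)
  simp only [spearPairs, mem_filter, mem_product, mem_Icc] at hp hℓ ⊢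
  omega

theorem continuousOn_spearJ :
    ContinuousOn (spearJ A B α β N) {H | ∀ ℓ ∈ Icc 1 (N - 1), 0 < H ℓ} := by
  have hLJ : ContinuousOn (LJ A B α β) (Set.Ioi 0) :=
    fun x hx => (hasDerivAt_LJ A B α β hx).continuousAt.continuousWithinAt
  refine ContinuousOn.congr (continuousOn_finsetSum _ fun p hp => hLJ.comp
    (continuous_finsetSum _ fun ℓ _ => continuous_apply ℓ).continuousOn
    fun H hH => sum_Icc_pos_of_mem_spearPairs hH hp) fun H _ => spearJ_eq_sum_spearPairs

theorem exists_spearJ_minimizer (hA : 0 < A) (hB : 0 < B) (hβ : 0 < β) (hαβ : β < α) (N : ℕ) :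
    ∃ Hstar : ℕ → ℝ, (∀ k ∈ Icc 1 (N - 1), 0 < Hstar k) ∧
      ∀ H : ℕ → ℝ, (∀ k ∈ Icc 1 (N - 1), 0 < H k) →
        spearJ A B α β N Hstar ≤ spearJ A B α β N H := by
  set a := ljArgmin A B α β
  have ha : 0 < a := ljArgmin_pos hA hB (hβ.trans hαβ) hβ
  obtain ⟨m, hm0, hm⟩ := exists_le_LJ hA hB hβ.le hαβ
  set J₀ := spearJ A B α β N fun _ => a
  obtain ⟨ε, hε, hεJ⟩ : ∃ ε > 0, Set.Ioo 0 ε ⊆ {x | J₀ - #(spearPairs N) • m ≤ LJ A B α β x} :=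
    mem_nhdsGT_iff_exists_Ioo_subset.1 <|
      (tendsto_LJ_nhdsGT_zero hA (hβ.trans hαβ) hαβ).eventually_ge_atTop _
  set δ := min ε a
  have hδ : 0 < δ := lt_min hε ha
  -- `spearJ` only sees the coordinates in `Icc 1 (N - 1)`, and by the two reductions below it
  -- suffices to minimize over the box `[δ, a] ^ ℕ`, compact by Tychonoff
  obtain ⟨Hstar, hHstar, hmin⟩ := isCompact_Icc.exists_isMinOn
    (Set.nonempty_Icc.2 fun _ => min_le_right ε a)
    (continuousOn_spearJ.mono fun H hH ℓ _ => hδ.trans_le (hH.1 ℓ))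
  refine ⟨Hstar, fun k _ => hδ.trans_le (hHstar.1 k), fun H hH => ?_⟩
  by_cases hshort : ∃ k ∈ Icc 1 (N - 1), H k < δ
  · obtain ⟨k, hk, hlt⟩ := hshort
    have hlarge : J₀ - #(spearPairs N) • m ≤ LJ A B α β (H k) :=
      hεJ ⟨hH k hk, hlt.trans_le (min_le_left ε a)⟩
    calc spearJ A B α β N Hstar ≤ J₀ := hmin ⟨fun _ => min_le_right ε a, le_rfl⟩
      _ ≤ LJ A B α β (H k) + #(spearPairs N) • m := by linarith
      _ ≤ spearJ A B α β N H := LJ_add_card_smul_le_spearJ hH hk hm0 hm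
  · push Not at hshort
    set G := fun ℓ => if ℓ ∈ Icc 1 (N - 1) then min (H ℓ) a else a
    have hG : G ∈ Set.Icc (fun _ => δ) (fun _ => a) := by
      refine ⟨fun ℓ => ?_, fun ℓ => ?_⟩ <;> simp only [G] <;> split_ifs with hℓ
      exacts [le_min (hshort ℓ hℓ) (min_le_right ε a), min_le_right ε a, min_le_right _ _, le_rfl]
    calc spearJ A B α β N Hstar ≤ spearJ A B α β N G := hmin hG
      _ = spearJ A B α β N fun ℓ => if ℓ ∈ Icc 1 (N - 1) then min (H ℓ) a else H ℓ :=
          spearJ_congr fun ℓ hℓ => by simp only [G, if_pos hℓ]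
      _ ≤ spearJ A B α β N H := spearJ_ite_min_ljArgmin_le hA hB hβ hαβ subset_rfl hH

end Spear

theorem spear_minimizer_exists_and_properties_general
    (N : ℕ) (A B α β : ℝ) (hA : 0 < A) (hB : 0 < B)
    (hβ : 1 < β) (hαβ : β < α) :
    (∃ Hstar : ℕ → ℝ, (∀ k ∈ Finset.Icc 1 (N - 1), 0 < Hstar k) ∧
      (∀ H : ℕ → ℝ, (∀ k ∈ Finset.Icc 1 (N - 1), 0 < H k) →
        spearJ A B α β N Hstar ≤ spearJ A B α β N H)) ∧
    (∀ Hstar : ℕ → ℝ, (∀ k ∈ Finset.Icc 1 (N - 1), 0 < Hstar k) →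
      (∀ H : ℕ → ℝ, (∀ k ∈ Finset.Icc 1 (N - 1), 0 < H k) →
        spearJ A B α β N Hstar ≤ spearJ A B α β N H) →
      (∀ k ∈ Finset.Icc 1 (N - 1),
        (α * A / (β * B * zetaR β)) ^ (1 / (α - β)) ≤ Hstar k ∧
        Hstar k ≤ (α * A / (β * B)) ^ (1 / (α - β))) ∧
      (∀ k ∈ Finset.Icc 1 (N - 1),
        ∑ i ∈ Finset.Icc 1 k, ∑ j ∈ Finset.Icc k (N - 1),
          LJ' A B α β (∑ ℓ ∈ Finset.Icc i j, Hstar ℓ) = 0)) := by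
  have hβ0 : 0 < β := one_pos.trans hβ
  refine ⟨exists_spearJ_minimizer hA hB hβ0 hαβ N, fun Hstar hpos hmin => ?_⟩
  have hgrad : ∀ k ∈ Icc 1 (N - 1), spearGrad A B α β N Hstar k = 0 :=
    fun k hk => spearGrad_eq_zero_of_forall_le hpos hmin hk
  refine ⟨fun k hk => ⟨?_, ?_⟩, fun k hk => (sum_product _ _ _).symm.trans (hgrad k hk)⟩
  · obtain ⟨k₀, hk₀, hk₀min⟩ := exists_min_image (Icc 1 (N - 1)) Hstar ⟨k, hk⟩
    exact (rpow_le_of_spearGrad_eq_zero hA hB hβ hαβ hpos hk₀ hk₀min (hgrad k₀ hk₀)).trans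
      (hk₀min k hk)
  · exact le_of_not_gt fun hlt => (spearGrad_pos hA hB hβ0 hαβ hpos hk hlt).ne' (hgrad k hk)

/-- The infimum of `J` over `(0,∞)^{N−1}` is attained, and every global minimizer
satisfies `ȟ ≤ h*_k ≤ ĥ` as well as the Euler–Lagrange equations
`Σ_{i=1}^{k} Σ_{j=k}^{N−1} L'(Σ_{ℓ=i}^{j} h*_ℓ) = 0` for all `k = 1, …, N−1`. -/
theorem spear_minimizer_exists_and_properties
    (N : ℕ) (hN : 2 ≤ N) (A B α β : ℝ) (hA : 0 < A) (hB : 0 < B)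
    (hβ : 1 < β) (hαβ : β < α) :
    (∃ Hstar : ℕ → ℝ, (∀ k ∈ Finset.Icc 1 (N - 1), 0 < Hstar k) ∧
      (∀ H : ℕ → ℝ, (∀ k ∈ Finset.Icc 1 (N - 1), 0 < H k) →
        spearJ A B α β N Hstar ≤ spearJ A B α β N H)) ∧
    (∀ Hstar : ℕ → ℝ, (∀ k ∈ Finset.Icc 1 (N - 1), 0 < Hstar k) →
      (∀ H : ℕ → ℝ, (∀ k ∈ Finset.Icc 1 (N - 1), 0 < H k) →
        spearJ A B α β N Hstar ≤ spearJ A B α β N H) →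
      (∀ k ∈ Finset.Icc 1 (N - 1),
        (α * A / (β * B * zetaR β)) ^ (1 / (α - β)) ≤ Hstar k ∧
        Hstar k ≤ (α * A / (β * B)) ^ (1 / (α - β))) ∧
      (∀ k ∈ Finset.Icc 1 (N - 1),
        ∑ i ∈ Finset.Icc 1 k, ∑ j ∈ Finset.Icc k (N - 1),
          LJ' A B α β (∑ ℓ ∈ Finset.Icc i j, Hstar ℓ) = 0)) :=
  spear_minimizer_exists_and_properties_general N A B α β hA hB hβ hαβ
end

section
/- Let N ≥ 2 be an integer, A, B > 0 and α > β > 1, and assume h† := (α(α+1)A/(β(β+1)B))^{1/(α−β)} ≤ 2ȟ. Then for every H ∈ [ȟ, ĥ]^{N−1} and every index 1 ≤ μ ≤ N−1, the diagonal Hessian entry Q_{μμ}(H) := Σ_{i=1}^{μ} Σ_{j=μ+1}^{N} L''(Σ_{ℓ=i}^{j−1} h_ℓ) satisfies Q_{μμ}(H) ≥ Λ_d := βB(α−β)/ĥ^{β+2} − β(β+1)B(ζ(β+1)−1)/ȟ^{β+2}. -/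
/-- Second derivative of the Lennard-Jones potential:
`L''(h) = α(α+1)A/h^(α+2) − β(β+1)B/h^(β+2)`. -/
noncomputable def LJ'' (A B α β x : ℝ) : ℝ :=
  α * (α + 1) * A / x ^ (α + 2) - β * (β + 1) * B / x ^ (β + 2)

/-- Hessian entry of the spear energy:
`Q_{μν}(H) = Σ_{i=1}^{min(μ,ν)} Σ_{j=max(μ,ν)+1}^{N} L''(Σ_{ℓ=i}^{j−1} h_ℓ)`. -/
noncomputable def hessQ (A B α β : ℝ) (N : ℕ) (H : ℕ → ℝ) (μ ν : ℕ) : ℝ :=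
  ∑ i ∈ Finset.Icc 1 (min μ ν), ∑ j ∈ Finset.Icc (max μ ν + 1) N,
    LJ'' A B α β (∑ ℓ ∈ Finset.Icc i (j - 1), H ℓ)

/-!
Split off the nearest-neighbour pair `(μ, μ + 1)`. Since `h_μ ≤ ĥ`, i.e.
`h_μ^(α-β) ≤ αA/(βB)`, the repulsive part of `L''(h_μ)` is at least `(α + 1)βB/h_μ^(β+2)`,
so `L''(h_μ) ≥ βB(α - β)/ĥ^(β+2)`. Every other pair `(i, j)` spans `k = j - i ≥ 2` bonds,
so its length is at least `kȟ` and `L''` there is at least `-β(β+1)B/(kȟ)^(β+2)`. At most `k`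
pairs have gap `k`, so these terms add up to at least
`-β(β+1)B/ȟ^(β+2) · ∑_{k ≥ 2} k^(-(β+1)) = -β(β+1)B(ζ(β+1) - 1)/ȟ^(β+2)`.
-/

open Finset

-- The extra `n = 0` term is `1 / 0 ^ s = 1 / 0 = 0`.
lemma zetaR_eq_tsum_one_div_nat_rpow {s : ℝ} (hs : 1 < s) :
    zetaR s = ∑' n : ℕ, 1 / (n : ℝ) ^ s := by
  rw [(Real.summable_one_div_nat_rpow.mpr hs).tsum_eq_zero_add, zetaR]
  simp [Real.zero_rpow (by linarith : s ≠ 0)]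

lemma zetaR_pos_s5 {s : ℝ} (hs : 1 < s) : 0 < zetaR s := by
  rw [zetaR_eq_tsum_one_div_nat_rpow hs]
  exact (Real.summable_one_div_nat_rpow.mpr hs).tsum_pos (fun _ => by positivity) 1 (by simp)

lemma sum_Icc_two_one_div_rpow_le {s : ℝ} (hs : 1 < s) (N : ℕ) :
    ∑ k ∈ Icc 2 N, 1 / (k : ℝ) ^ s ≤ zetaR s - 1 := by
  have h := (Real.summable_one_div_nat_rpow.mpr hs).sum_le_tsum (insert 1 (Icc 2 N))
    (fun _ _ => by positivity)
  rw [sum_insert (by simp), ← zetaR_eq_tsum_one_div_nat_rpow hs] at h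
  simp only [Nat.cast_one, Real.one_rpow, div_one] at h
  linarith

lemma mem_pairs_erase {μ N : ℕ} {p : ℕ × ℕ}
    (hp : p ∈ (Icc 1 μ ×ˢ Icc (μ + 1) N).erase (μ, μ + 1)) :
    1 ≤ p.1 ∧ p.1 ≤ μ ∧ μ + 1 ≤ p.2 ∧ p.2 ≤ N ∧ 2 ≤ p.2 - p.1 := by
  obtain ⟨i, j⟩ := p
  simp only [mem_erase, mem_product, mem_Icc, ne_eq, Prod.mk.injEq] at hp
  omega

lemma sum_pairs_erase_le_sum_mul (g : ℕ → ℝ) (hg : ∀ k, 0 ≤ g k) (μ N : ℕ) :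
    ∑ p ∈ (Icc 1 μ ×ˢ Icc (μ + 1) N).erase (μ, μ + 1), g (p.2 - p.1) ≤
      ∑ k ∈ Icc 2 N, k * g k := by
  set P := (Icc 1 μ ×ˢ Icc (μ + 1) N).erase (μ, μ + 1)
  -- A pair is determined by its gap `k` and by `μ - i < k`.
  let e : ℕ × ℕ → (_ : ℕ) × ℕ := fun p => ⟨p.2 - p.1, μ - p.1⟩
  have he : Set.InjOn e P := by
    intro p hp q hq hpq
    have := mem_pairs_erase hp
    have := mem_pairs_erase hq
    simp only [e, Sigma.mk.injEq, heq_eq_eq] at hpq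
    ext <;> omega
  have himage : P.image e ⊆ (Icc 2 N).sigma range := by
    intro q hq
    obtain ⟨p, hp, rfl⟩ := mem_image.1 hq
    have := mem_pairs_erase hp
    simp only [e, mem_sigma, mem_Icc, mem_range]
    omega
  calc ∑ p ∈ P, g (p.2 - p.1)
      = ∑ q ∈ P.image e, g q.1 := (sum_image (f := fun q => g q.1) he).symm
    _ ≤ ∑ q ∈ (Icc 2 N).sigma range, g q.1 :=
        sum_le_sum_of_subset_of_nonneg himage fun _ _ _ => hg _
    _ = ∑ k ∈ Icc 2 N, k * g k := by simp [sum_sigma]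

lemma LJ''_ge_of_le_rpow {A B α β h : ℝ} (hA : 0 < A) (hB : 0 < B) (hβ : 0 < β) (hαβ : β < α)
    (hh : 0 < h) (hle : h ≤ (α * A / (β * B)) ^ (1 / (α - β))) :
    β * B * (α - β) / ((α * A / (β * B)) ^ (1 / (α - β))) ^ (β + 2) ≤ LJ'' A B α β h := by
  have hα : 0 < α := hβ.trans hαβ
  have hq : 0 < α * A / (β * B) := by positivity
  have hpow : h ^ (α - β) ≤ α * A / (β * B) := by
    rwa [one_div, Real.le_rpow_inv_iff_of_pos hh.le hq.le (sub_pos.2 hαβ)] at hle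
  have hrep : (α + 1) * (β * B) / h ^ (β + 2) ≤ α * (α + 1) * A / h ^ (α + 2) :=
    calc (α + 1) * (β * B) / h ^ (β + 2)
        = (α + 1) * (β * B) * h ^ (α - β) / (h ^ (α - β) * h ^ (β + 2)) := by field_simp
      _ ≤ (α + 1) * (β * B) * (α * A / (β * B)) / (h ^ (α - β) * h ^ (β + 2)) := by gcongr
      _ = α * (α + 1) * A / h ^ (α + 2) := by
        rw [← Real.rpow_add hh, show α - β + (β + 2) = α + 2 by ring]; field_simp
  calc β * B * (α - β) / ((α * A / (β * B)) ^ (1 / (α - β))) ^ (β + 2)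
      ≤ β * B * (α - β) / h ^ (β + 2) := by
        have : 0 < α - β := sub_pos.2 hαβ
        gcongr
    _ = (α + 1) * (β * B) / h ^ (β + 2) - β * (β + 1) * B / h ^ (β + 2) := by ring
    _ ≤ LJ'' A B α β h := by rw [LJ'']; linarith

lemma neg_div_rpow_le_LJ'' {A B α β c x : ℝ} (hA : 0 ≤ A) (hB : 0 ≤ B) (hα : 0 ≤ α)
    (hβ : 0 ≤ β) (hc : 0 < c) (hcx : c ≤ x) :
    -(β * (β + 1) * B / c ^ (β + 2)) ≤ LJ'' A B α β x := by
  have hx : 0 < x := hc.trans_le hcx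
  have hatt : β * (β + 1) * B / x ^ (β + 2) ≤ β * (β + 1) * B / c ^ (β + 2) := by gcongr
  have hrep : 0 ≤ α * (α + 1) * A / x ^ (α + 2) := by positivity
  rw [LJ'']
  linarith

lemma neg_div_card_rpow_le_LJ''_sum {A B α β m : ℝ} (hA : 0 ≤ A) (hB : 0 ≤ B) (hα : 0 ≤ α)
    (hβ : 0 ≤ β) (hm : 0 < m) {s : Finset ℕ} (hs : s.Nonempty) {H : ℕ → ℝ}
    (hH : ∀ ℓ ∈ s, m ≤ H ℓ) :
    -(β * (β + 1) * B / m ^ (β + 2) * (1 / (#s : ℝ) ^ (β + 2))) ≤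
      LJ'' A B α β (∑ ℓ ∈ s, H ℓ) := by
  have hcard : (0 : ℝ) < #s := by exact_mod_cast hs.card_pos
  have hsum : #s * m ≤ ∑ ℓ ∈ s, H ℓ := by
    simpa [nsmul_eq_mul] using card_nsmul_le_sum s H m hH
  convert neg_div_rpow_le_LJ'' hA hB hα hβ (by positivity) hsum using 2
  rw [Real.mul_rpow hcard.le hm.le]
  field_simp

lemma sum_pairs_erase_LJ''_ge {A B α β m : ℝ} (hA : 0 ≤ A) (hB : 0 ≤ B) (hα : 0 ≤ α)
    (hβ : 0 < β) (hm : 0 < m) (μ N : ℕ) {H : ℕ → ℝ} (hH : ∀ k ∈ Icc 1 (N - 1), m ≤ H k) :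
    -(β * (β + 1) * B * (zetaR (β + 1) - 1) / m ^ (β + 2)) ≤
      ∑ p ∈ (Icc 1 μ ×ˢ Icc (μ + 1) N).erase (μ, μ + 1),
        LJ'' A B α β (∑ ℓ ∈ Icc p.1 (p.2 - 1), H ℓ) := by
  set c := β * (β + 1) * B / m ^ (β + 2)
  have hc : 0 ≤ c := by positivity
  have hzeta : ∑ k ∈ Icc 2 N, (k : ℝ) * (1 / (k : ℝ) ^ (β + 2)) ≤ zetaR (β + 1) - 1 := by
    refine (sum_congr rfl fun k hk => ?_).trans_le (sum_Icc_two_one_div_rpow_le (by linarith) N)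
    have hk : (0 : ℝ) < k := by have := (mem_Icc.1 hk).1; positivity
    rw [show β + 2 = (β + 1) + 1 by ring, Real.rpow_add hk, Real.rpow_one]
    field_simp
  calc -(β * (β + 1) * B * (zetaR (β + 1) - 1) / m ^ (β + 2))
      = -(c * (zetaR (β + 1) - 1)) := by ring
    _ ≤ -(c * ∑ p ∈ (Icc 1 μ ×ˢ Icc (μ + 1) N).erase (μ, μ + 1),
          1 / ((p.2 - p.1 : ℕ) : ℝ) ^ (β + 2)) := by
        gcongr
        exact (sum_pairs_erase_le_sum_mul _ (fun _ => by positivity) μ N).trans hzeta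
    _ = ∑ p ∈ (Icc 1 μ ×ˢ Icc (μ + 1) N).erase (μ, μ + 1),
          -(c * (1 / (#(Icc p.1 (p.2 - 1)) : ℝ) ^ (β + 2))) := by
        rw [mul_sum, ← sum_neg_distrib]
        refine sum_congr rfl fun p hp => ?_
        have := mem_pairs_erase hp
        rw [Nat.card_Icc, show p.2 - 1 + 1 - p.1 = p.2 - p.1 by omega]
    _ ≤ _ := sum_le_sum fun p hp => by
        have := mem_pairs_erase hp
        refine neg_div_card_rpow_le_LJ''_sum hA hB hα hβ.le hm (nonempty_Icc.2 (by omega))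
          fun ℓ hℓ => hH ℓ ?_
        simp only [mem_Icc] at hℓ ⊢
        omega

lemma hessQ_self_eq_add_sum_erase (A B α β : ℝ) (H : ℕ → ℝ) {μ N : ℕ} (hμ : 1 ≤ μ)
    (hμN : μ + 1 ≤ N) :
    hessQ A B α β N H μ μ = LJ'' A B α β (H μ) +
      ∑ p ∈ (Icc 1 μ ×ˢ Icc (μ + 1) N).erase (μ, μ + 1),
        LJ'' A B α β (∑ ℓ ∈ Icc p.1 (p.2 - 1), H ℓ) := by
  have hmem : (μ, μ + 1) ∈ Icc 1 μ ×ˢ Icc (μ + 1) N := by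
    simp only [mem_product, mem_Icc]; omega
  rw [hessQ, min_self, max_self, ← sum_product', ← add_sum_erase _ _ hmem]
  simp

theorem spear_hessian_diagonal_bound_general
    (N : ℕ) (A B α β : ℝ) (hA : 0 < A) (hB : 0 < B)
    (hβ : 1 < β) (hαβ : β < α)
    (H : ℕ → ℝ)
    (Hbox : ∀ k ∈ Finset.Icc 1 (N - 1),
      (α * A / (β * B * zetaR β)) ^ (1 / (α - β)) ≤ H k ∧
      H k ≤ (α * A / (β * B)) ^ (1 / (α - β))) :
    ∀ μ ∈ Finset.Icc 1 (N - 1),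
      β * B * (α - β) / ((α * A / (β * B)) ^ (1 / (α - β))) ^ (β + 2) -
        β * (β + 1) * B * (zetaR (β + 1) - 1) /
          ((α * A / (β * B * zetaR β)) ^ (1 / (α - β))) ^ (β + 2) ≤
      hessQ A B α β N H μ μ := by
  intro μ hμ
  have hζ := zetaR_pos_s5 hβ
  have hβ0 : 0 < β := by linarith
  have hα : 0 < α := hβ0.trans hαβ
  have hcheck : 0 < (α * A / (β * B * zetaR β)) ^ (1 / (α - β)) := by positivity
  obtain ⟨hlow, hup⟩ := Hbox μ hμ
  have hdiag := LJ''_ge_of_le_rpow hA hB hβ0 hαβ (hcheck.trans_le hlow) hup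
  have hoff := sum_pairs_erase_LJ''_ge hA.le hB.le hα.le hβ0 hcheck μ N
    fun k hk => (Hbox k hk).1
  rw [mem_Icc] at hμ
  rw [hessQ_self_eq_add_sum_erase A B α β H hμ.1 (by omega)]
  linarith

/-- Diagonal Hessian entries of `J` on the box `[ȟ, ĥ]^{N−1}` are at least
`Λ_d = βB(α−β)/ĥ^{β+2} − β(β+1)B(ζ(β+1)−1)/ȟ^{β+2}`, assuming `h† ≤ 2ȟ`. -/
theorem spear_hessian_diagonal_bound
    (N : ℕ) (hN : 2 ≤ N) (A B α β : ℝ) (hA : 0 < A) (hB : 0 < B)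
    (hβ : 1 < β) (hαβ : β < α)
    (hdag : (α * (α + 1) * A / (β * (β + 1) * B)) ^ (1 / (α - β)) ≤
      2 * (α * A / (β * B * zetaR β)) ^ (1 / (α - β)))
    (H : ℕ → ℝ)
    (Hbox : ∀ k ∈ Finset.Icc 1 (N - 1),
      (α * A / (β * B * zetaR β)) ^ (1 / (α - β)) ≤ H k ∧
      H k ≤ (α * A / (β * B)) ^ (1 / (α - β))) :
    ∀ μ ∈ Finset.Icc 1 (N - 1),
      β * B * (α - β) / ((α * A / (β * B)) ^ (1 / (α - β))) ^ (β + 2) -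
        β * (β + 1) * B * (zetaR (β + 1) - 1) /
          ((α * A / (β * B * zetaR β)) ^ (1 / (α - β))) ^ (β + 2) ≤
      hessQ A B α β N H μ μ :=
  spear_hessian_diagonal_bound_general N A B α β hA hB hβ hαβ H Hbox
end

section
/- Let N ≥ 2 be an integer, A, B > 0 and α > β > 1, and assume h‡ := (α(α+1)(α+2)A/(β(β+1)(β+2)B))^{1/(α−β)} ≤ 2ȟ. Then for every H ∈ [ȟ, ĥ]^{N−1} the Hessian matrix of J at H, with entries Q_{μν}(H) := Σ_{i=1}^{min(μ,ν)} Σ_{j=max(μ,ν)+1}^{N} L''(Σ_{ℓ=i}^{j−1} h_ℓ), is uniformly diagonally dominant: for every 1 ≤ μ ≤ N−1, |Q_{μμ}(H)| − Σ_{ν≠μ} |Q_{μν}(H)| ≥ Λ₁, where Λ₁ := βB(α−β)/ĥ^{β+2} − β(β+1)B(ζ(β+1)+ζ(β)−2)/ȟ^{β+2}. -/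
/-!
Split the diagonal entry `Q_μμ` into the nearest-neighbour term `L''(h_μ)`, which is at least
`βB(α−β)/ĥ^{β+2}` because `h_μ ≤ ĥ`, and the terms of the pairs `i ≤ μ < j` with `j − i ≥ 2`.
For those the distance `d = h_i + ⋯ + h_{j−1}` is at least `(j − i)ȟ ≥ 2ȟ ≥ h‡`, which lies beyond
the zero of `L''`, so `|L''(d)| ≤ β(β+1)B/((j − i)ȟ)^{β+2}`. At most `k` pairs `i ≤ μ < j` have
`j − i = k`, and at most `k²` triples `(ν, i, j)` with `i ≤ ν < j`, `ν ≠ μ` do, so the two tails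
are bounded by `β(β+1)B/ȟ^{β+2}` times `ζ(β+1) − 1` and `ζ(β) − 1` respectively.
-/

open Finset

lemma summable_one_div_natCast_add_one_rpow {x : ℝ} (hx : 1 < x) :
    Summable fun n : ℕ => (1 : ℝ) / ((n : ℝ) + 1) ^ x := by
  refine ((Real.summable_one_div_nat_add_rpow 1 x).mpr hx).congr fun n => ?_
  rw [abs_of_nonneg (by positivity)]

lemma sum_rpow_neg_le_zetaR_sub_one {x : ℝ} (hx : 1 < x) {T : Finset ℕ}
    (hT : ∀ k ∈ T, 2 ≤ k) : ∑ k ∈ T, (k : ℝ) ^ (-x) ≤ zetaR x - 1 := by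
  have hinj : Set.InjOn (· - 1) (T : Set ℕ) := fun a ha b hb hab => by
    have := hT a ha; have := hT b hb; simp only at hab; omega
  have h0 : 0 ∉ T.image (· - 1) := by
    simp only [mem_image, not_exists, not_and]
    intro k hk; have := hT k hk; omega
  have hshift : 1 + ∑ k ∈ T, (k : ℝ) ^ (-x) =
      ∑ n ∈ insert 0 (T.image (· - 1)), 1 / (((n : ℕ) : ℝ) + 1) ^ x := by
    rw [sum_insert h0, sum_image hinj]
    refine congrArg₂ _ (by simp) (sum_congr rfl fun k hk => ?_)
    have hk : ((k - 1 : ℕ) : ℝ) + 1 = k := by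
      have := hT k hk; rw [Nat.cast_sub (by omega)]; ring
    rw [hk, Real.rpow_neg (by positivity), one_div]
  have := (summable_one_div_natCast_add_one_rpow hx).sum_le_tsum
    (insert 0 (T.image (· - 1))) fun n _ => by positivity
  rw [zetaR]
  linarith

lemma one_le_zetaR {x : ℝ} (hx : 1 < x) : 1 ≤ zetaR x := by
  simpa using sum_rpow_neg_le_zetaR_sub_one hx (T := ∅) (by simp)

lemma sum_natCast_rpow_comp_le_zetaR_sub_one {ι : Type*} {s : Finset ι} (φ : ι → ℕ) {x : ℝ}
    (hx : 1 < x) (r : ℕ) (hφ : ∀ i ∈ s, 2 ≤ φ i) (hfiber : ∀ k, #{i ∈ s | φ i = k} ≤ k ^ r) :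
    ∑ i ∈ s, (φ i : ℝ) ^ (-(x + r)) ≤ zetaR x - 1 := by
  rw [sum_comp (fun k : ℕ => (k : ℝ) ^ (-(x + r))) φ]
  calc _ ≤ ∑ k ∈ s.image φ, (k : ℝ) ^ (-x) := sum_le_sum fun k hk => ?_
    _ ≤ zetaR x - 1 := sum_rpow_neg_le_zetaR_sub_one hx (by simpa using hφ)
  have hk : (0 : ℝ) < k := by
    obtain ⟨i, hi, rfl⟩ := mem_image.mp hk
    have := hφ i hi; positivity
  calc #{i ∈ s | φ i = k} • (k : ℝ) ^ (-(x + r)) ≤ (k ^ r) • (k : ℝ) ^ (-(x + r)) :=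
        nsmul_le_nsmul_left (by positivity) (hfiber k)
    _ = (k : ℝ) ^ (-x) := by
        rw [nsmul_eq_mul, Nat.cast_pow, ← Real.rpow_natCast, ← Real.rpow_add hk]
        ring_nf

lemma card_filter_sub_eq_le (μ N k : ℕ) :
    #{p ∈ Icc 1 μ ×ˢ Icc (μ + 1) N | p.2 - p.1 = k} ≤ k := by
  calc _ ≤ #(Icc (μ + 1 - k) μ) := card_le_card_of_injOn Prod.fst ?_ ?_
    _ ≤ k := by simp only [Nat.card_Icc]; omega
  · intro p hp
    simp only [coe_filter, mem_product, mem_Icc, Set.mem_ofPred_eq, coe_Icc, Set.mem_Icc] at hp ⊢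
    omega
  · intro p hp q hq hpq
    simp only [coe_filter, mem_product, mem_Icc, Set.mem_ofPred_eq] at hp hq hpq
    ext <;> omega

lemma card_filter_sigma_sub_eq_le (μ N k : ℕ) :
    #{q ∈ ((Icc 1 (N - 1)).erase μ).sigma (fun ν => Icc 1 (min μ ν) ×ˢ Icc (max μ ν + 1) N) |
      q.2.2 - q.2.1 = k} ≤ k ^ 2 := by
  calc _ ≤ #(Icc (μ + 1 - k) μ ×ˢ range k) :=
        card_le_card_of_injOn (fun q => (q.2.1, q.1 - q.2.1)) ?_ ?_
    _ ≤ k ^ 2 := by rw [card_product, Nat.card_Icc, card_range, sq]; gcongr; omega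
  · intro q hq
    simp only [coe_filter, mem_sigma, mem_erase, mem_product, mem_Icc, Set.mem_ofPred_eq,
      coe_product, coe_Icc, coe_range, Set.mem_prod, Set.mem_Icc, Set.mem_Iio] at hq ⊢
    omega
  · rintro ⟨ν, i, j⟩ hq ⟨ν', i', j'⟩ hq' h
    simp only [coe_filter, mem_sigma, mem_erase, mem_product, mem_Icc, Set.mem_ofPred_eq,
      Prod.mk.injEq] at hq hq' h
    obtain rfl : i = i' := h.1
    obtain rfl : ν = ν' := by omega
    obtain rfl : j = j' := by omega
    rfl

lemma rpow_add_two_eq_mul (α β : ℝ) {h : ℝ} (hh : 0 < h) :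
    h ^ (α + 2) = h ^ (β + 2) * h ^ (α - β) := by
  rw [← Real.rpow_add hh]; ring_nf

section LennardJones

variable {A B α β : ℝ}

lemma div_rpow_le_LJ'' {h : ℝ} (hα : 0 < α) (hh : 0 < h) (hpow : β * B * h ^ (α - β) ≤ α * A) :
    β * B * (α - β) / h ^ (β + 2) ≤ LJ'' A B α β h := by
  have hdiff : LJ'' A B α β h - β * B * (α - β) / h ^ (β + 2) =
      (α + 1) * (α * A - β * B * h ^ (α - β)) / h ^ (α + 2) := by
    have hP : h ^ (β + 2) ≠ 0 := (Real.rpow_pos_of_pos hh _).ne'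
    have hR : h ^ (α - β) ≠ 0 := (Real.rpow_pos_of_pos hh _).ne'
    rw [LJ'', rpow_add_two_eq_mul α β hh]
    field_simp
    ring
  have : 0 ≤ (α + 1) * (α * A - β * B * h ^ (α - β)) / h ^ (α + 2) :=
    div_nonneg (mul_nonneg (by linarith) (by linarith)) (by positivity)
  linarith

lemma div_rpow_le_LJ''_of_le_rpow {h : ℝ} (hA : 0 < A) (hB : 0 < B) (hβ : 0 < β) (hαβ : β < α)
    (hh : 0 < h) (hh' : h ≤ (α * A / (β * B)) ^ (1 / (α - β))) :
    β * B * (α - β) / ((α * A / (β * B)) ^ (1 / (α - β))) ^ (β + 2) ≤ LJ'' A B α β h := by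
  have hα : 0 < α := hβ.trans hαβ
  have hpow : β * B * h ^ (α - β) ≤ α * A := by
    rwa [one_div, Real.le_rpow_inv_iff_of_pos hh.le (by positivity) (by linarith),
      le_div_iff₀ (by positivity), mul_comm] at hh'
  refine le_trans ?_ (div_rpow_le_LJ'' hα hh hpow)
  have : 0 ≤ β * B * (α - β) := mul_nonneg (by positivity) (by linarith)
  gcongr

lemma abs_LJ''_le {d : ℝ} (hA : 0 < A) (hα : 0 < α) (hd : 0 < d)
    (hpow : α * (α + 1) * A ≤ β * (β + 1) * B * d ^ (α - β)) :
    |LJ'' A B α β d| ≤ β * (β + 1) * B / d ^ (β + 2) := by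
  have hrep : α * (α + 1) * A / d ^ (α + 2) ≤ β * (β + 1) * B / d ^ (β + 2) := by
    calc α * (α + 1) * A / d ^ (α + 2)
        ≤ β * (β + 1) * B * d ^ (α - β) / (d ^ (β + 2) * d ^ (α - β)) := by
          rw [← rpow_add_two_eq_mul α β hd]; gcongr
      _ = β * (β + 1) * B / d ^ (β + 2) := by
          rw [mul_div_mul_right _ _ (by positivity)]
  exact abs_sub_le_of_nonneg_of_le (by positivity) hrep
    ((by positivity : (0 : ℝ) ≤ _).trans hrep) le_rfl

lemma mul_le_mul_rpow_of_rpow_le {x : ℝ} (hA : 0 < A) (hB : 0 < B) (hβ : 0 < β) (hαβ : β < α)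
    (hx : 0 ≤ x)
    (h : (α * (α + 1) * (α + 2) * A / (β * (β + 1) * (β + 2) * B)) ^ (1 / (α - β)) ≤ x) :
    α * (α + 1) * A ≤ β * (β + 1) * B * x ^ (α - β) := by
  have hα : 0 < α := hβ.trans hαβ
  rw [one_div, Real.rpow_inv_le_iff_of_pos (by positivity) hx (by linarith)] at h
  have hq : α * (α + 1) * A / (β * (β + 1) * B) ≤
      α * (α + 1) * (α + 2) * A / (β * (β + 1) * (β + 2) * B) := by
    rw [div_le_div_iff₀ (by positivity) (by positivity)]
    have : 0 ≤ α * (α + 1) * A * (β * (β + 1) * B) := by positivity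
    nlinarith
  rw [← div_le_iff₀' (by positivity)]
  exact hq.trans h

end LennardJones

section Spear

variable {A B α β a : ℝ} {N : ℕ} {H : ℕ → ℝ}

lemma abs_LJ''_sum_le (hA : 0 < A) (hB : 0 < B) (hβ : 0 < β) (hαβ : β < α) (ha : 0 < a)
    (hsign : α * (α + 1) * A ≤ β * (β + 1) * B * (2 * a) ^ (α - β))
    {i j : ℕ} (hij : i + 2 ≤ j) (hH : ∀ ℓ ∈ Icc i (j - 1), a ≤ H ℓ) :
    |LJ'' A B α β (∑ ℓ ∈ Icc i (j - 1), H ℓ)| ≤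
      β * (β + 1) * B / a ^ (β + 2) * ((j - i : ℕ) : ℝ) ^ (-(β + 2)) := by
  set d := ∑ ℓ ∈ Icc i (j - 1), H ℓ
  have hk : (2 : ℝ) ≤ (j - i : ℕ) := by exact_mod_cast (by omega : 2 ≤ j - i)
  have hd : (j - i : ℕ) * a ≤ d := by
    have := card_nsmul_le_sum _ _ _ hH
    rwa [Nat.card_Icc, nsmul_eq_mul, (by omega : j - 1 + 1 - i = j - i)] at this
  have h2a : 2 * a ≤ d := le_trans (by nlinarith) hd
  have hsign_d : α * (α + 1) * A ≤ β * (β + 1) * B * d ^ (α - β) :=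
    hsign.trans (by gcongr)
  calc |LJ'' A B α β d| ≤ β * (β + 1) * B / d ^ (β + 2) :=
        abs_LJ''_le hA (hβ.trans hαβ) (by linarith) hsign_d
    _ ≤ β * (β + 1) * B / ((j - i : ℕ) * a) ^ (β + 2) := by gcongr
    _ = β * (β + 1) * B / a ^ (β + 2) * ((j - i : ℕ) : ℝ) ^ (-(β + 2)) := by
        rw [Real.mul_rpow (by positivity) ha.le, Real.rpow_neg (by positivity)]
        ring

lemma hessQ_self_eq {μ : ℕ} (hμ : μ ∈ Icc 1 (N - 1)) :
    hessQ A B α β N H μ μ = LJ'' A B α β (H μ) +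
      ∑ p ∈ (Icc 1 μ ×ˢ Icc (μ + 1) N).erase (μ, μ + 1),
        LJ'' A B α β (∑ ℓ ∈ Icc p.1 (p.2 - 1), H ℓ) := by
  have hmem : (μ, μ + 1) ∈ Icc 1 μ ×ˢ Icc (μ + 1) N := by
    simp only [mem_Icc] at hμ; simp only [mem_product, mem_Icc]; omega
  rw [hessQ, min_self, max_self, ← sum_product', ← add_sum_erase _ _ hmem]
  simp

lemma sum_abs_LJ''_erase_le (hA : 0 < A) (hB : 0 < B) (hβ : 1 < β) (hαβ : β < α) (ha : 0 < a)
    (hsign : α * (α + 1) * A ≤ β * (β + 1) * B * (2 * a) ^ (α - β))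
    (hH : ∀ ℓ ∈ Icc 1 (N - 1), a ≤ H ℓ) (μ : ℕ) :
    ∑ p ∈ (Icc 1 μ ×ˢ Icc (μ + 1) N).erase (μ, μ + 1),
        |LJ'' A B α β (∑ ℓ ∈ Icc p.1 (p.2 - 1), H ℓ)| ≤
      β * (β + 1) * B / a ^ (β + 2) * (zetaR (β + 1) - 1) := by
  have hgap : ∀ p ∈ (Icc 1 μ ×ˢ Icc (μ + 1) N).erase (μ, μ + 1), 2 ≤ p.2 - p.1 := by
    rintro ⟨i, j⟩ hp
    simp only [mem_erase, mem_product, mem_Icc, ne_eq, Prod.mk.injEq] at hp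
    omega
  calc _ ≤ ∑ p ∈ (Icc 1 μ ×ˢ Icc (μ + 1) N).erase (μ, μ + 1),
        β * (β + 1) * B / a ^ (β + 2) * ((p.2 - p.1 : ℕ) : ℝ) ^ (-(β + 2)) :=
      sum_le_sum fun p hp => abs_LJ''_sum_le hA hB (by linarith) hαβ ha hsign (by
        have := hgap p hp; omega) fun ℓ hℓ => hH ℓ (by
          simp only [mem_erase, mem_product, mem_Icc] at hp hℓ; simp only [mem_Icc]; omega)
    _ ≤ _ := by
      rw [← mul_sum]
      refine mul_le_mul_of_nonneg_left ((sum_congr rfl fun p _ => ?_).trans_le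
        (sum_natCast_rpow_comp_le_zetaR_sub_one (fun p : ℕ × ℕ => p.2 - p.1)
          (by linarith : 1 < β + 1) 1 hgap fun k =>
            (card_le_card (filter_subset_filter _ (erase_subset _ _))).trans
              ((card_filter_sub_eq_le μ N k).trans (pow_one k).ge))) (by positivity)
      push_cast; ring_nf

lemma sum_abs_hessQ_erase_le (hA : 0 < A) (hB : 0 < B) (hβ : 1 < β) (hαβ : β < α) (ha : 0 < a)
    (hsign : α * (α + 1) * A ≤ β * (β + 1) * B * (2 * a) ^ (α - β))
    (hH : ∀ ℓ ∈ Icc 1 (N - 1), a ≤ H ℓ) (μ : ℕ) :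
    ∑ ν ∈ (Icc 1 (N - 1)).erase μ, |hessQ A B α β N H μ ν| ≤
      β * (β + 1) * B / a ^ (β + 2) * (zetaR β - 1) := by
  set S := ((Icc 1 (N - 1)).erase μ).sigma fun ν => Icc 1 (min μ ν) ×ˢ Icc (max μ ν + 1) N
  have hgap : ∀ q ∈ S, 2 ≤ q.2.2 - q.2.1 := by
    rintro ⟨ν, i, j⟩ hq
    simp only [S, mem_sigma, mem_erase, mem_product, mem_Icc] at hq
    show 2 ≤ j - i
    omega
  calc _ ≤ ∑ ν ∈ (Icc 1 (N - 1)).erase μ, ∑ p ∈ Icc 1 (min μ ν) ×ˢ Icc (max μ ν + 1) N,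
        |LJ'' A B α β (∑ ℓ ∈ Icc p.1 (p.2 - 1), H ℓ)| := sum_le_sum fun ν _ => by
          rw [hessQ, ← sum_product']; exact abs_sum_le_sum_abs _ _
    _ = ∑ q ∈ S, |LJ'' A B α β (∑ ℓ ∈ Icc q.2.1 (q.2.2 - 1), H ℓ)| := by
      rw [sum_sigma]
    _ ≤ ∑ q ∈ S, β * (β + 1) * B / a ^ (β + 2) * ((q.2.2 - q.2.1 : ℕ) : ℝ) ^ (-(β + 2)) :=
      sum_le_sum fun q hq => abs_LJ''_sum_le hA hB (by linarith) hαβ ha hsign (by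
        have := hgap q hq; omega) fun ℓ hℓ => hH ℓ (by
          simp only [S, mem_sigma, mem_erase, mem_product, mem_Icc] at hq hℓ
          simp only [mem_Icc]; omega)
    _ ≤ _ := by
      rw [← mul_sum]
      refine mul_le_mul_of_nonneg_left ((sum_congr rfl fun q _ => ?_).trans_le
        (sum_natCast_rpow_comp_le_zetaR_sub_one (fun q : (_ : ℕ) × ℕ × ℕ => q.2.2 - q.2.1)
          hβ 2 hgap (card_filter_sigma_sub_eq_le μ N))) (by positivity)
      push_cast; ring_nf

end Spear

theorem spear_hessian_diagonally_dominant_general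
    (N : ℕ) (A B α β : ℝ) (hA : 0 < A) (hB : 0 < B)
    (hβ : 1 < β) (hαβ : β < α)
    (hddag : (α * (α + 1) * (α + 2) * A / (β * (β + 1) * (β + 2) * B)) ^ (1 / (α - β)) ≤
      2 * (α * A / (β * B * zetaR β)) ^ (1 / (α - β)))
    (H : ℕ → ℝ)
    (Hbox : ∀ k ∈ Finset.Icc 1 (N - 1),
      (α * A / (β * B * zetaR β)) ^ (1 / (α - β)) ≤ H k ∧
      H k ≤ (α * A / (β * B)) ^ (1 / (α - β))) :
    ∀ μ ∈ Finset.Icc 1 (N - 1),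
      β * B * (α - β) / ((α * A / (β * B)) ^ (1 / (α - β))) ^ (β + 2) -
        β * (β + 1) * B * (zetaR (β + 1) + zetaR β - 2) /
          ((α * A / (β * B * zetaR β)) ^ (1 / (α - β))) ^ (β + 2) ≤
      |hessQ A B α β N H μ μ| -
        ∑ ν ∈ (Finset.Icc 1 (N - 1)).erase μ, |hessQ A B α β N H μ ν| := by
  intro μ hμ
  set hcheck := (α * A / (β * B * zetaR β)) ^ (1 / (α - β))
  have hβ0 : 0 < β := by linarith
  have hcheck_pos : 0 < hcheck := by
    have := one_le_zetaR hβ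
    have : 0 < α := by linarith
    positivity
  have hsign := mul_le_mul_rpow_of_rpow_le hA hB hβ0 hαβ (by positivity) hddag
  have hH : ∀ ℓ ∈ Icc 1 (N - 1), hcheck ≤ H ℓ := fun ℓ hℓ => (Hbox ℓ hℓ).1
  have hnear := div_rpow_le_LJ''_of_le_rpow hA hB hβ0 hαβ (hcheck_pos.trans_le (Hbox μ hμ).1) (Hbox μ hμ).2
  have htail := sum_abs_LJ''_erase_le hA hB hβ hαβ hcheck_pos hsign hH μ
  have hoff := sum_abs_hessQ_erase_le hA hB hβ hαβ hcheck_pos hsign hH μ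
  have hsplit : β * (β + 1) * B * (zetaR (β + 1) + zetaR β - 2) / hcheck ^ (β + 2) =
      β * (β + 1) * B / hcheck ^ (β + 2) * (zetaR (β + 1) - 1) +
        β * (β + 1) * B / hcheck ^ (β + 2) * (zetaR β - 1) := by ring
  rw [hessQ_self_eq hμ, hsplit]
  set tail := ∑ p ∈ (Icc 1 μ ×ˢ Icc (μ + 1) N).erase (μ, μ + 1),
    LJ'' A B α β (∑ ℓ ∈ Icc p.1 (p.2 - 1), H ℓ)
  have := (neg_abs_le tail).trans' (neg_le_neg (abs_sum_le_sum_abs _ _))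
  linarith [le_abs_self (LJ'' A B α β (H μ) + tail)]

/-- The Hessian of `J` on the box `[ȟ, ĥ]^{N−1}` is uniformly diagonally dominant:
`|Q_{μμ}| − Σ_{ν≠μ} |Q_{μν}| ≥ Λ₁`, where
`Λ₁ = βB(α−β)/ĥ^{β+2} − β(β+1)B(ζ(β+1)+ζ(β)−2)/ȟ^{β+2}`, assuming `h‡ ≤ 2ȟ`. -/
theorem spear_hessian_diagonally_dominant
    (N : ℕ) (hN : 2 ≤ N) (A B α β : ℝ) (hA : 0 < A) (hB : 0 < B)
    (hβ : 1 < β) (hαβ : β < α)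
    (hddag : (α * (α + 1) * (α + 2) * A / (β * (β + 1) * (β + 2) * B)) ^ (1 / (α - β)) ≤
      2 * (α * A / (β * B * zetaR β)) ^ (1 / (α - β)))
    (H : ℕ → ℝ)
    (Hbox : ∀ k ∈ Finset.Icc 1 (N - 1),
      (α * A / (β * B * zetaR β)) ^ (1 / (α - β)) ≤ H k ∧
      H k ≤ (α * A / (β * B)) ^ (1 / (α - β))) :
    ∀ μ ∈ Finset.Icc 1 (N - 1),
      β * B * (α - β) / ((α * A / (β * B)) ^ (1 / (α - β))) ^ (β + 2) -
        β * (β + 1) * B * (zetaR (β + 1) + zetaR β - 2) /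
          ((α * A / (β * B * zetaR β)) ^ (1 / (α - β))) ^ (β + 2) ≤
      |hessQ A B α β N H μ μ| -
        ∑ ν ∈ (Finset.Icc 1 (N - 1)).erase μ, |hessQ A B α β N H μ ν| :=
  spear_hessian_diagonally_dominant_general N A B α β hA hB hβ hαβ hddag H Hbox
end

section
/- The function x ↦ (x+1)ζ(x) is strictly increasing on the interval [3, +∞), where ζ denotes the Riemann zeta function. -/
/-!
Write `(x + 1) ζ(x) = (x + 1) + ∑_{n ≥ 2} (x + 1) n^{-x}`. The first summand has slope `1`.
By `1 - e^{-t} ≤ t` and `(x + 1) 2^{3 - x} ≤ 4`, the remaining terms together decrease, per unit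
of `x`, by at most `4 ∑_{n ≥ 2} log n / n³`, and this is `< 1`: the terms `n = 2, 3` are summed
exactly, and for `n ≥ 4` the bound `log n / n ≤ log 4 / 4` makes the tail telescope.
-/

open Real Finset

lemma summable_one_div_nat_add_rpow_of_nonneg {a x : ℝ} (ha : 0 ≤ a) (hx : 1 < x) :
    Summable fun n : ℕ => 1 / ((n : ℝ) + a) ^ x := by
  refine ((Real.summable_one_div_nat_add_rpow a x).2 hx).congr fun n => ?_
  rw [abs_of_nonneg (by positivity)]

lemma zetaR_eq_one_add_tsum {x : ℝ} (hx : 1 < x) :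
    zetaR x = 1 + ∑' n : ℕ, 1 / ((n : ℝ) + 2) ^ x := by
  rw [zetaR, (summable_one_div_nat_add_rpow_of_nonneg zero_le_one hx).tsum_eq_zero_add]
  push_cast
  norm_num [add_assoc, one_add_one_eq_two]

lemma exp_sub_exp_le_sub_mul_exp (u v : ℝ) : exp u - exp v ≤ (u - v) * exp u := by
  have h : exp v = exp u * exp (v - u) := by rw [← exp_add, add_sub_cancel]
  nlinarith [add_one_le_exp (v - u), exp_pos u]

lemma one_div_rpow_sub_one_div_rpow_le {a : ℝ} (ha : 0 < a) (x y : ℝ) :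
    1 / a ^ x - 1 / a ^ y ≤ (y - x) * log a / a ^ x := by
  simp only [rpow_def_of_pos ha, div_eq_mul_inv, one_mul, ← exp_neg]
  convert exp_sub_exp_le_sub_mul_exp (-(log a * x)) (-(log a * y)) using 1
  ring

lemma add_one_le_four_mul_two_rpow {x : ℝ} (hx : 3 ≤ x) : x + 1 ≤ 4 * 2 ^ (x - 3) := by
  rw [rpow_def_of_pos two_pos]
  nlinarith [add_one_le_exp (log 2 * (x - 3)), log_two_gt_d9]

lemma add_one_div_rpow_le {a x : ℝ} (ha : 2 ≤ a) (hx : 3 ≤ x) :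
    (x + 1) / a ^ x ≤ 4 / a ^ 3 := by
  have ha0 : 0 < a := by linarith
  have hsplit : a ^ x = a ^ 3 * a ^ (x - 3) := by
    rw [← rpow_natCast, ← rpow_add ha0]; norm_num
  have hpow : (2 : ℝ) ^ (x - 3) ≤ a ^ (x - 3) := rpow_le_rpow zero_le_two ha (by linarith)
  rw [hsplit, div_le_div_iff₀ (by positivity) (by positivity)]
  have hcube : 0 < a ^ 3 := by positivity
  nlinarith [add_one_le_four_mul_two_rpow hx]

lemma add_one_div_rpow_sub_le {a x y : ℝ} (ha : 2 ≤ a) (hx : 3 ≤ x) (hxy : x ≤ y) :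
    (x + 1) / a ^ x - (y + 1) / a ^ y ≤ 4 * (y - x) * (log a / a ^ 3) := by
  have ha0 : 0 < a := by linarith
  have hlog : 0 ≤ log a := log_nonneg (by linarith)
  calc (x + 1) / a ^ x - (y + 1) / a ^ y ≤ (x + 1) * (1 / a ^ x - 1 / a ^ y) := by
        have : (x + 1) / a ^ y ≤ (y + 1) / a ^ y := by gcongr
        rw [mul_sub, mul_one_div, mul_one_div]
        linarith
    _ ≤ (x + 1) * ((y - x) * log a / a ^ x) :=
        mul_le_mul_of_nonneg_left (one_div_rpow_sub_one_div_rpow_le ha0 x y) (by linarith)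
    _ = (y - x) * log a * ((x + 1) / a ^ x) := by ring
    _ ≤ (y - x) * log a * (4 / a ^ 3) :=
        mul_le_mul_of_nonneg_left (add_one_div_rpow_le ha hx) (mul_nonneg (by linarith) hlog)
    _ = 4 * (y - x) * (log a / a ^ 3) := by ring

lemma log_add_four_div_cube_le (n : ℕ) :
    log ((n : ℝ) + 4) / ((n : ℝ) + 4) ^ 3 ≤
      log 4 / 4 * (1 / ((n : ℝ) + 3) - 1 / ((n : ℝ) + 4)) := by
  have hlog : log ((n : ℝ) + 4) / ((n : ℝ) + 4) ≤ log 4 / 4 :=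
    log_div_self_antitoneOn (Set.mem_Ici.2 (exp_one_lt_d9.le.trans (by norm_num)))
      (Set.mem_Ici.2 (exp_one_lt_d9.le.trans (by norm_num; linarith [n.cast_nonneg (α := ℝ)])))
      (by simp)
  calc log ((n : ℝ) + 4) / ((n : ℝ) + 4) ^ 3
      = log ((n : ℝ) + 4) / ((n : ℝ) + 4) / ((n : ℝ) + 4) ^ 2 := by
        rw [div_div, ← pow_succ']
    _ ≤ log 4 / 4 / (((n : ℝ) + 3) * ((n : ℝ) + 4)) := by
        gcongr
        nlinarith
    _ = _ := by field_simp; ring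

lemma sum_range_log_add_four_div_cube_le (N : ℕ) :
    ∑ n ∈ range N, log ((n : ℝ) + 4) / ((n : ℝ) + 4) ^ 3 ≤ log 4 / 12 := by
  have htel := sum_range_sub' (fun n : ℕ => 1 / ((n : ℝ) + 3)) N
  push_cast at htel
  calc ∑ n ∈ range N, log ((n : ℝ) + 4) / ((n : ℝ) + 4) ^ 3
      ≤ ∑ n ∈ range N, log 4 / 4 * (1 / ((n : ℝ) + 3) - 1 / ((n : ℝ) + 4)) :=
        sum_le_sum fun n _ => log_add_four_div_cube_le n
    _ = log 4 / 4 * (1 / 3 - 1 / ((N : ℝ) + 3)) := by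
        rw [← mul_sum]
        norm_num [add_assoc] at htel ⊢
        rw [htel]
    _ ≤ log 4 / 12 := by
        have hN : 0 ≤ 1 / ((N : ℝ) + 3) := by positivity
        nlinarith [log_nonneg (show (1 : ℝ) ≤ 4 by norm_num)]

lemma log_add_two_div_cube_comp_add_two :
    (fun n : ℕ => log (((n + 2 : ℕ) : ℝ) + 2) / (((n + 2 : ℕ) : ℝ) + 2) ^ 3) =
      fun n : ℕ => log ((n : ℝ) + 4) / ((n : ℝ) + 4) ^ 3 := by
  funext n
  push_cast
  ring_nf

lemma log_add_four_div_cube_nonneg (n : ℕ) : 0 ≤ log ((n : ℝ) + 4) / ((n : ℝ) + 4) ^ 3 :=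
  div_nonneg (log_nonneg (by linarith [n.cast_nonneg (α := ℝ)])) (by positivity)

lemma summable_log_add_two_div_cube :
    Summable fun n : ℕ => log ((n : ℝ) + 2) / ((n : ℝ) + 2) ^ 3 := by
  refine (summable_nat_add_iff 2).mp ?_
  rw [log_add_two_div_cube_comp_add_two]
  exact summable_of_sum_range_le log_add_four_div_cube_nonneg sum_range_log_add_four_div_cube_le

lemma tsum_log_add_two_div_cube_lt :
    ∑' n : ℕ, log ((n : ℝ) + 2) / ((n : ℝ) + 2) ^ 3 < 1 / 4 := by
  rw [← summable_log_add_two_div_cube.sum_add_tsum_nat_add 2, log_add_two_div_cube_comp_add_two]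
  have htail :=
    Real.tsum_le_of_sum_range_le log_add_four_div_cube_nonneg sum_range_log_add_four_div_cube_le
  have hlog3 : log 3 ≤ log 2 + 1 / 2 := by
    have h := log_le_sub_one_of_pos (show (0 : ℝ) < 3 / 2 by norm_num)
    rw [log_div three_ne_zero two_ne_zero] at h
    linarith
  have hlog4 : log 4 = 2 * log 2 := by
    rw [show (4 : ℝ) = 2 ^ 2 by norm_num, log_pow, Nat.cast_ofNat]
  norm_num [sum_range_succ] at htail ⊢
  nlinarith [log_two_lt_d9]

/-- The function `x ↦ (x+1)ζ(x)` is strictly increasing on `[3, +∞)`. -/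
theorem strictMonoOn_add_one_mul_zeta :
    StrictMonoOn (fun x : ℝ => (x + 1) * zetaR x) (Set.Ici (3 : ℝ)) := by
  intro x hx y hy hxy
  simp only [Set.mem_Ici] at hx hy
  have hsum : ∀ z : ℝ, 3 ≤ z → Summable fun n : ℕ => (z + 1) / ((n : ℝ) + 2) ^ z :=
    fun z hz => ((summable_one_div_nat_add_rpow_of_nonneg zero_le_two (by linarith)).mul_left
      (z + 1)).congr fun n => mul_one_div _ _
  have hdiff : (x + 1) * zetaR x - (y + 1) * zetaR y =
      (x - y) + ∑' n : ℕ, ((x + 1) / ((n : ℝ) + 2) ^ x - (y + 1) / ((n : ℝ) + 2) ^ y) := by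
    rw [zetaR_eq_one_add_tsum (by linarith), zetaR_eq_one_add_tsum (by linarith),
      (hsum x hx).tsum_sub (hsum y hy)]
    simp only [mul_add, ← tsum_mul_left, mul_one_div]
    ring
  have hbound : ∑' n : ℕ, ((x + 1) / ((n : ℝ) + 2) ^ x - (y + 1) / ((n : ℝ) + 2) ^ y) ≤
      4 * (y - x) * ∑' n : ℕ, log ((n : ℝ) + 2) / ((n : ℝ) + 2) ^ 3 := by
    rw [← tsum_mul_left]
    refine ((hsum x hx).sub (hsum y hy)).tsum_le_tsum (fun n => ?_)
      (summable_log_add_two_div_cube.mul_left _)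
    exact add_one_div_rpow_sub_le (by linarith [n.cast_nonneg (α := ℝ)]) hx hxy.le
  have hS := mul_lt_mul_of_pos_left tsum_log_add_two_div_cube_lt (sub_pos.2 hxy)
  show (x + 1) * zetaR x < (y + 1) * zetaR y
  linarith
end

section
/- The function x ↦ xζ(x) is strictly increasing on the interval [3, +∞), where ζ denotes the Riemann zeta function. -/
open Real

lemma mul_log_div_rpow_le {a c M : ℝ} (hc : 1 ≤ c) (hca : c ≤ a) (hM : 1 ≤ M) :
    a * log M / M ^ a ≤ c / exp 1 / M ^ (c - 1) := by
  have hM0 : 0 < M := by linarith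
  have hlog : 0 ≤ log M := log_nonneg hM
  have hc0 : c ≠ 0 := (by linarith : (0 : ℝ) < c).ne'
  set u := a * log M / c with hu
  have hMa : M ^ a = exp u * exp ((c - 1) * u) := by
    rw [rpow_def_of_pos hM0, ← exp_add, hu]; congr 1; field_simp; ring
  have hMc : M ^ (c - 1) ≤ exp ((c - 1) * u) := by
    rw [rpow_def_of_pos hM0, mul_comm]
    exact exp_le_exp.mpr (mul_le_mul_of_nonneg_left
      ((le_div_iff₀ (by linarith)).mpr (by nlinarith)) (by linarith))
  calc a * log M / M ^ a = c * (u * exp (-u)) / exp ((c - 1) * u) := by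
        rw [hMa, exp_neg, hu]; field_simp
    _ ≤ c * exp (-1) / M ^ (c - 1) := by
        gcongr
        exact mul_exp_neg_le_exp_neg_one u
    _ = c / exp 1 / M ^ (c - 1) := by rw [exp_neg]; field_simp

lemma div_rpow_sub_div_rpow_le {a b c M : ℝ} (hc : 1 ≤ c) (hca : c ≤ a) (hab : a ≤ b)
    (hM : 1 ≤ M) : a / M ^ a - b / M ^ b ≤ (b - a) * (c / exp 1) / M ^ (c - 1) := by
  have hM0 : 0 < M := by linarith
  have hdecay : 1 - M ^ (a - b) ≤ (b - a) * log M := by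
    rw [rpow_def_of_pos hM0]; linarith [add_one_le_exp (log M * (a - b))]
  calc a / M ^ a - b / M ^ b ≤ a / M ^ a - a / M ^ b := by gcongr
    _ = a / M ^ a * (1 - M ^ (a - b)) := by rw [rpow_sub hM0]; field_simp
    _ ≤ a / M ^ a * ((b - a) * log M) :=
        mul_le_mul_of_nonneg_left hdecay (div_nonneg (by linarith) (by positivity))
    _ = (b - a) * (a * log M / M ^ a) := by ring
    _ ≤ (b - a) * (c / exp 1 / M ^ (c - 1)) :=
        mul_le_mul_of_nonneg_left (mul_log_div_rpow_le hc hca hM) (by linarith)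
    _ = (b - a) * (c / exp 1) / M ^ (c - 1) := by ring

lemma hasSum_one_div_nat_add_two_sq :
    HasSum (fun n : ℕ => 1 / ((n : ℝ) + 2) ^ 2) (π ^ 2 / 6 - 1) := by
  have := (hasSum_nat_add_iff' 2).mpr hasSum_zeta_two
  norm_num [Finset.sum_range_succ] at this
  simpa only [one_div] using this

lemma three_div_exp_one_mul_lt_one : 3 / exp 1 * (π ^ 2 / 6 - 1) < 1 := by
  rw [div_mul_eq_mul_div, div_lt_one (exp_pos 1)]
  nlinarith [pi_lt_d2, pi_pos, exp_one_gt_d9]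

lemma hasSum_mul_zetaR {x : ℝ} (hx : 1 < x) :
    HasSum (fun n : ℕ => x / ((n : ℝ) + 1) ^ x) (x * zetaR x) := by
  have hs : Summable fun n : ℕ => 1 / ((n : ℝ) + 1) ^ x := by
    exact_mod_cast (summable_nat_add_iff 1).mpr (summable_one_div_nat_rpow.mpr hx)
  simpa only [mul_one_div, zetaR] using hs.hasSum.mul_left x

/-- The function `x ↦ xζ(x)` is strictly increasing on `[3, +∞)`. -/
theorem strictMonoOn_mul_zeta :
    StrictMonoOn (fun x : ℝ => x * zetaR x) (Set.Ici (3 : ℝ)) := by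
  intro a (ha : 3 ≤ a) b (hb : 3 ≤ b) hab
  have hdiff := (hasSum_mul_zetaR (by linarith : (1:ℝ) < a)).sub
    (hasSum_mul_zetaR (by linarith : (1:ℝ) < b))
  have htail : HasSum (fun n : ℕ => a / ((n : ℝ) + 2) ^ a - b / ((n : ℝ) + 2) ^ b)
      (a * zetaR a - b * zetaR b - (a - b)) := by
    simpa [add_assoc, one_add_one_eq_two] using (hasSum_nat_add_iff' 1).mpr hdiff
  have hbound : HasSum (fun n : ℕ => (b - a) * (3 / exp 1) / ((n : ℝ) + 2) ^ 2)
      ((b - a) * (3 / exp 1) * (π ^ 2 / 6 - 1)) := by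
    simpa only [mul_one_div] using hasSum_one_div_nat_add_two_sq.mul_left ((b - a) * (3 / exp 1))
  have hterm (n : ℕ) : a / ((n : ℝ) + 2) ^ a - b / ((n : ℝ) + 2) ^ b ≤
      (b - a) * (3 / exp 1) / ((n : ℝ) + 2) ^ 2 := by
    have h := div_rpow_sub_div_rpow_le (c := 3) (by norm_num) ha hab.le
      (by linarith [n.cast_nonneg (α := ℝ)] : (1 : ℝ) ≤ n + 2)
    rwa [show (3 : ℝ) - 1 = 2 by norm_num, rpow_two] at h
  have htail_le := hasSum_le hterm htail hbound
  have hsmall := mul_lt_mul_of_pos_left three_div_exp_one_mul_lt_one (sub_pos.mpr hab)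
  rw [← mul_assoc] at hsmall
  show a * zetaR a < b * zetaR b
  linarith
end
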